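/- arXiv:1509.08853 — 5 statements merged into one kernel-verified Lean document; each statement's English description precedes it below -/
import Mathlib

section
/- For every non-crossing partition γ of {1,…,n}, the total number of blocks of γ plus the number of blocks of its Kreweras complement Kr(γ) equals n+1. -/
open Finset

/-- Two blocks cross if there are i < k < p < q with i,p in one and k,q in the other. -/
def Crossing {α : Type*} [LinearOrder α] (B D : Finset α) : Prop :=
  ∃ i ∈ B, ∃ p ∈ B, ∃ k ∈ D, ∃ q ∈ D, i < k ∧ k < p ∧ p < q

/-- A family of blocks is non-crossing. -/
def IsNonCrossing {α : Type*} [LinearOrder α] (P : Finset (Finset α)) : Prop :=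
  ∀ B ∈ P, ∀ D ∈ P, B ≠ D → ¬ Crossing B D

/-- Non-crossing partitions of {1, ..., n}, modelled on `Fin n`. -/
def NC (n : ℕ) : Set (Finset (Finset (Fin n))) :=
  {P | (∀ B ∈ P, B.Nonempty) ∧ (∀ a : Fin n, ∃! B, B ∈ P ∧ a ∈ B) ∧ IsNonCrossing P}

/-- Reversed refinement order: every block of `π` is contained in a block of `σ`. -/
def ncle {n : ℕ} (π σ : Finset (Finset (Fin n))) : Prop :=
  ∀ B ∈ π, ∃ D ∈ σ, B ⊆ D

/-- the position of `i` (an element "i") in the interlaced set 1 < 1̄ < 2 < 2̄ < ... -/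
def oddE (n : ℕ) (i : Fin n) : Fin (2 * n) := ⟨2 * i.1, by have := i.2; omega⟩

/-- the position of `ī` (a "barred" element) in the interlaced set. -/
def evenE (n : ℕ) (i : Fin n) : Fin (2 * n) := ⟨2 * i.1 + 1, by have := i.2; omega⟩

/-- `γ ∪ σ` viewed on the interlaced set 1 < 1̄ < 2 < 2̄ < ... < n < n̄. -/
def interlace {n : ℕ} (γ σ : Finset (Finset (Fin n))) : Finset (Finset (Fin (2 * n))) :=
  γ.image (fun B => B.image (oddE n)) ∪ σ.image (fun B => B.image (evenE n))

/-- `σ` is the Kreweras complement of `γ`: the largest non-crossing partition of the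
barred copies such that `γ ∪ σ` is non-crossing on the interlaced set. -/
def IsKreweras {n : ℕ} (γ σ : Finset (Finset (Fin n))) : Prop :=
  σ ∈ NC n ∧ IsNonCrossing (interlace γ σ) ∧
    ∀ τ ∈ NC n, IsNonCrossing (interlace γ τ) → ncle τ σ

namespace KP

variable {n : ℕ}

def inIv (i j x : Fin n) : Prop := min i j < x ∧ x ≤ max i j

lemma inIv_iff {i j x : Fin n} :
    inIv i j x ↔ ((i.1 < x.1 ∨ j.1 < x.1) ∧ (x.1 ≤ i.1 ∨ x.1 ≤ j.1)) := by
  simp only [inIv, min_lt_iff, le_max_iff, Fin.lt_def, Fin.le_def]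

lemma inIv_comm {i j x : Fin n} : inIv i j x ↔ inIv j i x := by
  rw [inIv_iff, inIv_iff]; tauto

lemma inIv_split {i j k x : Fin n} (h : inIv i k x) : inIv i j x ∨ inIv j k x := by
  simp only [inIv_iff] at h ⊢; omega

lemma inIv_triple {i j k x : Fin n} (h1 : inIv i j x) (h2 : inIv j k x)
    (h3 : inIv i k x) : False := by
  simp only [inIv_iff] at h1 h2 h3; omega

lemma not_inIv_self {i x : Fin n} : ¬ inIv i i x := by rw [inIv_iff]; omega

def rel (γ : Finset (Finset (Fin n))) (i j : Fin n) : Prop :=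
  ∀ B ∈ γ, (∃ x ∈ B, inIv i j x) → ∀ x ∈ B, inIv i j x

lemma rel_refl (γ : Finset (Finset (Fin n))) (i : Fin n) : rel γ i i := by
  rintro B hB ⟨x, hx, hix⟩
  exact absurd hix not_inIv_self

lemma rel_symm {γ : Finset (Finset (Fin n))} {i j : Fin n} (h : rel γ i j) : rel γ j i := by
  rintro B hB ⟨y, hy, hy2⟩ x hx
  exact inIv_comm.1 (h B hB ⟨y, hy, inIv_comm.1 hy2⟩ x hx)

lemma rel_trans {γ : Finset (Finset (Fin n))} {i j k : Fin n}
    (h1 : rel γ i j) (h2 : rel γ j k) : rel γ i k := by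
  rintro B hB ⟨y, hyB, hy⟩
  rcases inIv_split (j := j) hy with hy' | hy'
  · intro x hxB
    by_contra hx
    have hBij := h1 B hB ⟨y, hyB, hy'⟩
    have hxjk : inIv j k x := by
      rcases inIv_split (j := k) (hBij x hxB) with h | h
      · exact absurd h hx
      · exact inIv_comm.1 h
    have hBjk := h2 B hB ⟨x, hxB, hxjk⟩
    exact inIv_triple hy' (hBjk y hyB) hy
  · intro x hxB
    by_contra hx
    have hBjk := h2 B hB ⟨y, hyB, hy'⟩
    have hxij : inIv i j x := by
      rcases inIv_split (j := i) (hBjk x hxB) with h | h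
      · exact inIv_comm.1 h
      · exact absurd h hx
    have hBij := h1 B hB ⟨x, hxB, hxij⟩
    exact inIv_triple (hBij y hyB) hy' hy

noncomputable def cls (γ : Finset (Finset (Fin n))) (i : Fin n) : Finset (Fin n) :=
  @Finset.filter _ (fun j => rel γ i j) (Classical.decPred _) univ

lemma mem_cls {γ : Finset (Finset (Fin n))} {i j : Fin n} :
    j ∈ cls γ i ↔ rel γ i j := by
  simp [cls]

lemma self_mem_cls {γ : Finset (Finset (Fin n))} {i : Fin n} : i ∈ cls γ i :=
  mem_cls.2 (rel_refl γ i)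

lemma cls_eq_of_rel {γ : Finset (Finset (Fin n))} {i j : Fin n} (h : rel γ i j) :
    cls γ i = cls γ j := by
  ext x
  rw [mem_cls, mem_cls]
  exact ⟨fun hx => rel_trans (rel_symm h) hx, fun hx => rel_trans h hx⟩

noncomputable def krew (γ : Finset (Finset (Fin n))) : Finset (Finset (Fin n)) :=
  univ.image (cls γ)

lemma rel_of_mem_cls {γ : Finset (Finset (Fin n))} {c x y : Fin n}
    (hx : x ∈ cls γ c) (hy : y ∈ cls γ c) : rel γ x y :=
  rel_trans (rel_symm (mem_cls.1 hx)) (mem_cls.1 hy)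

lemma krew_mem_NC (γ : Finset (Finset (Fin n))) : krew γ ∈ NC n := by
  refine ⟨?_, ?_, ?_⟩
  · rintro B hB
    simp only [krew, mem_image, mem_univ, true_and] at hB
    obtain ⟨i, rfl⟩ := hB
    exact ⟨i, self_mem_cls⟩
  · intro a
    refine ⟨cls γ a, ⟨mem_image_of_mem _ (mem_univ a), self_mem_cls⟩, ?_⟩
    rintro B ⟨hB, haB⟩
    simp only [krew, mem_image, mem_univ, true_and] at hB
    obtain ⟨i, rfl⟩ := hB
    exact cls_eq_of_rel (mem_cls.1 haB)
  · rintro X hX Y hY hne ⟨i, hiX, p, hpX, k, hkY, q, hqY, h1, h2, h3⟩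
    simp only [krew, mem_image, mem_univ, true_and] at hX hY
    obtain ⟨b, rfl⟩ := hX
    obtain ⟨c, rfl⟩ := hY
    have hip : rel γ i p := rel_of_mem_cls hiX hpX
    have hkq : rel γ k q := rel_of_mem_cls hkY hqY
    rw [Fin.lt_def] at h1 h2 h3
    have hik : rel γ i k := by
      rintro E hE ⟨y, hyE, hy⟩ x hxE
      rw [inIv_iff] at hy
      have hyip : inIv i p y := by rw [inIv_iff]; omega
      have hEip := hip E hE ⟨y, hyE, hyip⟩
      have hxip := hEip x hxE
      rw [inIv_iff] at hxip
      rw [inIv_iff]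
      by_contra hcon
      have hxkq : inIv k q x := by rw [inIv_iff]; omega
      have hykq := hkq E hE ⟨x, hxE, hxkq⟩ y hyE
      rw [inIv_iff] at hykq
      omega
    exact hne ((cls_eq_of_rel (mem_cls.1 hiX)).trans
      ((cls_eq_of_rel hik).trans (cls_eq_of_rel (mem_cls.1 hkY)).symm))

noncomputable def mins (γ : Finset (Finset (Fin n))) : Finset (Fin n) :=
  @Finset.filter _ (fun i => ∀ j, rel γ i j → i ≤ j) (Classical.decPred _) univ

lemma mem_mins {γ : Finset (Finset (Fin n))} {i : Fin n} :
    i ∈ mins γ ↔ ∀ j, rel γ i j → i ≤ j := by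
  simp [mins]

lemma krew_card (γ : Finset (Finset (Fin n))) : (krew γ).card = (mins γ).card := by
  have himg : (mins γ).image (cls γ) = krew γ := by
    apply Subset.antisymm
    · exact image_subset_image (subset_univ _)
    · intro X hX
      simp only [krew, mem_image, mem_univ, true_and] at hX
      obtain ⟨x, rfl⟩ := hX
      have hne : (cls γ x).Nonempty := ⟨x, self_mem_cls⟩
      set m := (cls γ x).min' hne with hm
      have hmmem : m ∈ cls γ x := min'_mem _ _
      refine mem_image.2 ⟨m, ?_, (cls_eq_of_rel (mem_cls.1 hmmem)).symm⟩
      rw [mem_mins]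
      intro j hj
      exact min'_le _ j (by rw [cls_eq_of_rel (mem_cls.1 hmmem)]; exact mem_cls.2 hj)
  rw [← himg]
  apply card_image_of_injOn
  intro i hi j hj hij
  rw [Finset.mem_coe, mem_mins] at hi
  rw [Finset.mem_coe, mem_mins] at hj
  have h1 : rel γ i j := mem_cls.1 (hij ▸ self_mem_cls (γ := γ) (i := j))
  exact le_antisymm (hi j h1) (hj i (rel_symm h1))

lemma mem_interlace {γ σ : Finset (Finset (Fin n))} {X : Finset (Fin (2 * n))} :
    X ∈ interlace γ σ ↔
      (∃ B ∈ γ, B.image (oddE n) = X) ∨ ∃ B ∈ σ, B.image (evenE n) = X := by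
  simp [interlace]

lemma crossing_pull {f : Fin n → Fin (2 * n)} (hf : ∀ a b, f a < f b → a < b)
    {B D : Finset (Fin n)} (h : Crossing (B.image f) (D.image f)) : Crossing B D := by
  obtain ⟨i, hi, p, hp, k, hk, q, hq, h1, h2, h3⟩ := h
  simp only [mem_image] at hi hp hk hq
  obtain ⟨a, ha, rfl⟩ := hi
  obtain ⟨b, hb, rfl⟩ := hp
  obtain ⟨c, hc, rfl⟩ := hk
  obtain ⟨e, he, rfl⟩ := hq
  exact ⟨a, ha, b, hb, c, hc, e, he, hf _ _ h1, hf _ _ h2, hf _ _ h3⟩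

lemma oddE_mono : ∀ a b : Fin n, oddE n a < oddE n b → a < b := by
  intro a b h
  simp only [Fin.lt_def, oddE] at h ⊢
  omega

lemma evenE_mono : ∀ a b : Fin n, evenE n a < evenE n b → a < b := by
  intro a b h
  simp only [Fin.lt_def, evenE] at h ⊢
  omega

lemma interlace_krew (γ : Finset (Finset (Fin n))) (hγ : γ ∈ NC n) :
    IsNonCrossing (interlace γ (krew γ)) := by
  have hkrewNC := krew_mem_NC γ
  rintro X hX Y hY hne hcr
  rw [mem_interlace] at hX hY
  rcases hX with ⟨B, hB, rfl⟩ | ⟨B, hB, rfl⟩ <;> rcases hY with ⟨D, hD, rfl⟩ | ⟨D, hD, rfl⟩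
  · exact hγ.2.2 B hB D hD (fun h => hne (by rw [h])) (crossing_pull oddE_mono hcr)
  · -- X = B.image oddE with B ∈ γ, Y = D.image evenE with D ∈ krew γ
    simp only [krew, mem_image, mem_univ, true_and] at hD
    obtain ⟨c, rfl⟩ := hD
    obtain ⟨i, hi, p, hp, k, hk, q, hq, h1, h2, h3⟩ := hcr
    simp only [mem_image] at hi hp hk hq
    obtain ⟨a, ha, rfl⟩ := hi
    obtain ⟨b, hb, rfl⟩ := hp
    obtain ⟨c1, hc1, rfl⟩ := hk
    obtain ⟨d1, hd1, rfl⟩ := hq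
    simp only [Fin.lt_def, oddE, evenE] at h1 h2 h3
    have hrel : rel γ c1 d1 := rel_of_mem_cls hc1 hd1
    have hmeet : inIv c1 d1 b := by rw [inIv_iff]; omega
    have := hrel B hB ⟨b, hb, hmeet⟩ a ha
    rw [inIv_iff] at this
    omega
  · -- X = B.image evenE with B ∈ krew γ, Y = D.image oddE with D ∈ γ
    simp only [krew, mem_image, mem_univ, true_and] at hB
    obtain ⟨c, rfl⟩ := hB
    obtain ⟨i, hi, p, hp, k, hk, q, hq, h1, h2, h3⟩ := hcr
    simp only [mem_image] at hi hp hk hq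
    obtain ⟨c1, hc1, rfl⟩ := hi
    obtain ⟨d1, hd1, rfl⟩ := hp
    obtain ⟨a, ha, rfl⟩ := hk
    obtain ⟨b, hb, rfl⟩ := hq
    simp only [Fin.lt_def, oddE, evenE] at h1 h2 h3
    have hrel : rel γ c1 d1 := rel_of_mem_cls hc1 hd1
    have hmeet : inIv c1 d1 a := by rw [inIv_iff]; omega
    have := hrel D hD ⟨a, ha, hmeet⟩ b hb
    rw [inIv_iff] at this
    omega
  · exact hkrewNC.2.2 B hB D hD (fun h => hne (by rw [h])) (crossing_pull evenE_mono hcr)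

lemma krew_max (γ : Finset (Finset (Fin n))) (hγ : γ ∈ NC n)
    (τ : Finset (Finset (Fin n))) (hτ : τ ∈ NC n)
    (hnc : IsNonCrossing (interlace γ τ)) : ncle τ (krew γ) := by
  intro D hD
  obtain ⟨i0, hi0⟩ := hτ.1 D hD
  refine ⟨cls γ i0, mem_image_of_mem _ (mem_univ _), ?_⟩
  intro j hj
  rw [mem_cls]
  have key : ∀ a b : Fin n, a ∈ D → b ∈ D → a ≤ b → rel γ a b := by
    intro a b haD hbD hab
    rintro B hB ⟨x, hxB, hx⟩ y hyB
    by_contra hy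
    rw [inIv_iff] at hx hy
    rw [Fin.le_def] at hab
    have hBmem : B.image (oddE n) ∈ interlace γ τ :=
      mem_union_left _ (mem_image_of_mem _ hB)
    have hDmem : D.image (evenE n) ∈ interlace γ τ :=
      mem_union_right _ (mem_image_of_mem _ hD)
    have hneBD : B.image (oddE n) ≠ D.image (evenE n) := by
      intro h
      obtain ⟨z, hz⟩ := hγ.1 B hB
      have : oddE n z ∈ D.image (evenE n) := h ▸ mem_image_of_mem _ hz
      simp only [mem_image] at this
      obtain ⟨w, _, hw⟩ := this
      have := congrArg Fin.val hw
      simp only [oddE, evenE] at this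
      omega
    rcases (show y.1 ≤ a.1 ∨ b.1 < y.1 by omega) with hy' | hy'
    · refine hnc _ hBmem _ hDmem hneBD
        ⟨oddE n y, mem_image_of_mem _ hyB, oddE n x, mem_image_of_mem _ hxB,
         evenE n a, mem_image_of_mem _ haD, evenE n b, mem_image_of_mem _ hbD,
         ?_, ?_, ?_⟩ <;> (simp only [Fin.lt_def, oddE, evenE]; omega)
    · refine hnc _ hDmem _ hBmem hneBD.symm
        ⟨evenE n a, mem_image_of_mem _ haD, evenE n b, mem_image_of_mem _ hbD,
         oddE n x, mem_image_of_mem _ hxB, oddE n y, mem_image_of_mem _ hyB,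
         ?_, ?_, ?_⟩ <;> (simp only [Fin.lt_def, oddE, evenE]; omega)
  rcases le_total i0 j with h | h
  · exact key i0 j hi0 hj h
  · exact rel_symm (key j i0 hj hi0 h)

lemma ncle_antisymm {σ τ : Finset (Finset (Fin n))} (hσ : σ ∈ NC n) (hτ : τ ∈ NC n)
    (h1 : ncle σ τ) (h2 : ncle τ σ) : σ = τ := by
  have key : ∀ σ τ : Finset (Finset (Fin n)), σ ∈ NC n → τ ∈ NC n →
      ncle σ τ → ncle τ σ → σ ⊆ τ := by
    intro σ τ hσ hτ h1 h2 B hB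
    obtain ⟨D, hD, hBD⟩ := h1 B hB
    obtain ⟨B', hB', hDB'⟩ := h2 D hD
    obtain ⟨a, ha⟩ := hσ.1 B hB
    obtain ⟨W, _, hWu⟩ := hσ.2.1 a
    have hBB' : B = B' := by
      rw [hWu B ⟨hB, ha⟩, hWu B' ⟨hB', hBD.trans hDB' ha⟩]
    have : B = D := Subset.antisymm hBD (by rw [hBB']; exact hDB')
    rwa [this]
  exact Subset.antisymm (key σ τ hσ hτ h1 h2) (key τ σ hτ hσ h2 h1)

lemma step (γ : Finset (Finset (Fin n))) (hγ : γ ∈ NC n) (h2 : 2 ≤ γ.card) :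
    ∃ γ' , γ' ∈ NC n ∧ γ'.card + 1 = γ.card ∧ (mins γ').card = (mins γ).card + 1 := by
  obtain ⟨hne, huniq, hncr⟩ := hγ
  have hγne : γ.Nonempty := card_pos.1 (by omega)
  -- uniqueness helper
  have huB : ∀ {B B' : Finset (Fin n)} {a : Fin n},
      B ∈ γ → B' ∈ γ → a ∈ B → a ∈ B' → B = B' := by
    intro B B' a hB hB' ha ha'
    obtain ⟨W, _, hW⟩ := huniq a
    rw [hW B ⟨hB, ha⟩, hW B' ⟨hB', ha'⟩]
  -- the largest block-minimum d, its block D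
  set S : Finset (Fin n) := γ.attach.image (fun B => B.1.min' (hne B.1 B.2)) with hS
  have hSne : S.Nonempty := hγne.attach.image _
  set d : Fin n := S.max' hSne with hd
  have hdS : d ∈ S := max'_mem _ _
  obtain ⟨⟨D, hD⟩, -, hdD⟩ := mem_image.1 hdS
  have hdmem : d ∈ D := hdD ▸ min'_mem _ _
  have hdmin : ∀ x ∈ D, d ≤ x := fun x hx => hdD ▸ min'_le _ _ hx
  have hdmax : ∀ B, ∀ hB : B ∈ γ, B.min' (hne B hB) ≤ d := by
    intro B hB
    rw [hd]
    refine le_max' _ _ ?_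
    rw [hS]
    exact mem_image.2 ⟨⟨B, hB⟩, mem_attach _ _, rfl⟩
  have hd1 : 1 ≤ d.1 := by
    by_contra hcon
    obtain ⟨B1, hB1, B2, hB2, hB12⟩ := one_lt_card.1 (by omega : 1 < γ.card)
    have e1 : B1.min' (hne B1 hB1) = d := by
      have := Fin.le_def.1 (hdmax B1 hB1)
      exact Fin.ext (by omega)
    have e2 : B2.min' (hne B2 hB2) = d := by
      have := Fin.le_def.1 (hdmax B2 hB2)
      exact Fin.ext (by omega)
    exact hB12 (huB hB1 hB2 (e1 ▸ min'_mem _ _) (e2 ▸ min'_mem _ _))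
  set M : Fin n := D.max' ⟨d, hdmem⟩ with hM
  have hdM : d ≤ M := le_max' _ _ hdmem
  have vdM : d.1 ≤ M.1 := Fin.le_def.1 hdM
  have hMmem : M ∈ D := max'_mem _ _
  have hDmem : ∀ x ∈ D, d ≤ x ∧ x ≤ M := fun x hx => ⟨hdmin x hx, le_max' _ _ hx⟩
  -- D is the interval [d, M]
  have hint : ∀ y : Fin n, d ≤ y → y ≤ M → y ∈ D := by
    intro y hdy hyM
    by_contra hyD
    obtain ⟨By, ⟨hBy, hyBy⟩, -⟩ := huniq y
    have hByD : By ≠ D := fun h => hyD (h ▸ hyBy)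
    have hm := Fin.le_def.1 (hdmax By hBy)
    have hmne : By.min' (hne By hBy) ≠ d := by
      intro h
      exact hByD (huB hBy hD (h ▸ min'_mem _ _) hdmem)
    have hmne' : (By.min' (hne By hBy)).1 ≠ d.1 := fun h => hmne (Fin.ext h)
    have hyd : y.1 ≠ d.1 := fun h => hyD ((Fin.ext h : y = d) ▸ hdmem)
    have hyM' : y.1 ≠ M.1 := fun h => hyD ((Fin.ext h : y = M) ▸ hMmem)
    have vdy := Fin.le_def.1 hdy
    have vyM := Fin.le_def.1 hyM
    refine hncr By hBy D hD hByD
      ⟨By.min' (hne By hBy), min'_mem _ _, y, hyBy, d, hdmem, M, hMmem, ?_, ?_, ?_⟩ <;>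
      (rw [Fin.lt_def]; omega)
  -- the element e = d - 1 and its block C
  have hdn : d.1 < n := d.2
  set e : Fin n := ⟨d.1 - 1, by omega⟩ with he
  have hed : e.1 + 1 = d.1 := by simp only [he]; omega
  obtain ⟨C, ⟨hC, heC⟩, -⟩ := huniq e
  have hCD : C ≠ D := by
    intro h
    have := Fin.le_def.1 (hdmin e (h ▸ heC))
    omega
  have hout : ∀ B ∈ γ, B ≠ D → ∀ x ∈ B, ¬(d.1 ≤ x.1 ∧ x.1 ≤ M.1) := by
    rintro B hB hBD x hx ⟨hx1, hx2⟩
    exact hBD (huB hB hD hx (hint x (Fin.le_def.2 hx1) (Fin.le_def.2 hx2)))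
  set γ' := insert (C ∪ D) ((γ.erase C).erase D) with hγ'
  have hmem' : ∀ E, E ∈ γ' ↔ E = C ∪ D ∨ (E ∈ γ ∧ E ≠ C ∧ E ≠ D) := by
    intro E
    simp only [hγ', mem_insert, mem_erase]
    tauto
  -- γ' is a partition
  have hne' : ∀ B ∈ γ', B.Nonempty := by
    intro B hB
    rcases (hmem' B).1 hB with rfl | ⟨hB, -, -⟩
    · exact ⟨e, mem_union_left _ heC⟩
    · exact hne B hB
  have hcov' : ∀ a : Fin n, ∃! B, B ∈ γ' ∧ a ∈ B := by
    intro a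
    obtain ⟨B, ⟨hB, haB⟩, -⟩ := huniq a
    by_cases hBCD : B = C ∨ B = D
    · refine ⟨C ∪ D, ⟨(hmem' _).2 (Or.inl rfl), ?_⟩, ?_⟩
      · rcases hBCD with rfl | rfl
        · exact mem_union_left _ haB
        · exact mem_union_right _ haB
      · rintro E ⟨hE, haE⟩
        rcases (hmem' E).1 hE with rfl | ⟨hE, hEC, hED⟩
        · rfl
        · exfalso
          have hEB := huB hE hB haE haB
          rcases hBCD with rfl | rfl
          · exact hEC hEB
          · exact hED hEB
    · push_neg at hBCD
      refine ⟨B, ⟨(hmem' _).2 (Or.inr ⟨hB, hBCD.1, hBCD.2⟩), haB⟩, ?_⟩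
      rintro E ⟨hE, haE⟩
      rcases (hmem' E).1 hE with rfl | ⟨hE, hEC, hED⟩
      · exfalso
        rcases mem_union.1 haE with h | h
        · exact hBCD.1 (huB hB hC haB h)
        · exact hBCD.2 (huB hB hD haB h)
      · exact huB hE hB haE haB
  -- γ' is non-crossing
  have hncr' : IsNonCrossing γ' := by
    rintro X hX Y hY hXY hcr
    rcases (hmem' X).1 hX with rfl | ⟨hX', hXC, hXD⟩ <;>
      rcases (hmem' Y).1 hY with hYe | ⟨hY', hYC, hYD⟩
    · exact hXY hYe.symm
    · -- X = C ∪ D, Y ∈ γ, Y ≠ C, D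
      obtain ⟨i, hi, p, hp, k, hk, q, hq, c1, c2, c3⟩ := hcr
      rcases mem_union.1 hi with hiC | hiD <;> rcases mem_union.1 hp with hpC | hpD
      · exact hncr C hC Y hY' (Ne.symm hYC) ⟨i, hiC, p, hpC, k, hk, q, hq, c1, c2, c3⟩
      · -- i ∈ C, p ∈ D
        have hpd := Fin.le_def.1 (hDmem p hpD).1
        have hpM := Fin.le_def.1 (hDmem p hpD).2
        have hkO := hout Y hY' hYD k hk
        have hke : k.1 ≠ e.1 := fun h => hYC (huB hY' hC ((Fin.ext h : k = e) ▸ hk) heC)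
        have v1 := Fin.lt_def.1 c1
        have v2 := Fin.lt_def.1 c2
        have v3 := Fin.lt_def.1 c3
        refine hncr C hC Y hY' (Ne.symm hYC) ⟨i, hiC, e, heC, k, hk, q, hq, c1, ?_, ?_⟩ <;>
          (rw [Fin.lt_def]; omega)
      · -- i ∈ D, p ∈ C
        have hid := Fin.le_def.1 (hDmem i hiD).1
        have v1 := Fin.lt_def.1 c1
        refine hncr C hC Y hY' (Ne.symm hYC) ⟨e, heC, p, hpC, k, hk, q, hq, ?_, c2, c3⟩
        rw [Fin.lt_def]; omega
      · exact hncr D hD Y hY' (Ne.symm hYD) ⟨i, hiD, p, hpD, k, hk, q, hq, c1, c2, c3⟩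
    · -- X ∈ γ (≠ C, D), Y = C ∪ D
      subst hYe
      obtain ⟨i, hi, p, hp, k, hk, q, hq, c1, c2, c3⟩ := hcr
      rcases mem_union.1 hk with hkC | hkD <;> rcases mem_union.1 hq with hqC | hqD
      · exact hncr X hX' C hC hXC ⟨i, hi, p, hp, k, hkC, q, hqC, c1, c2, c3⟩
      · -- k ∈ C, q ∈ D
        have hqd := Fin.le_def.1 (hDmem q hqD).1
        have hqM := Fin.le_def.1 (hDmem q hqD).2
        have hpO := hout X hX' hXD p hp
        have hpe : p.1 ≠ e.1 := fun h => hXC (huB hX' hC ((Fin.ext h : p = e) ▸ hp) heC)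
        have v1 := Fin.lt_def.1 c1
        have v2 := Fin.lt_def.1 c2
        have v3 := Fin.lt_def.1 c3
        refine hncr X hX' C hC hXC ⟨i, hi, p, hp, k, hkC, e, heC, c1, c2, ?_⟩
        rw [Fin.lt_def]; omega
      · -- k ∈ D, q ∈ C
        have hkd := Fin.le_def.1 (hDmem k hkD).1
        have hkM := Fin.le_def.1 (hDmem k hkD).2
        have hiO := hout X hX' hXD i hi
        have hie : i.1 ≠ e.1 := fun h => hXC (huB hX' hC ((Fin.ext h : i = e) ▸ hi) heC)
        have v1 := Fin.lt_def.1 c1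
        have v2 := Fin.lt_def.1 c2
        have v3 := Fin.lt_def.1 c3
        refine hncr X hX' C hC hXC ⟨i, hi, p, hp, e, heC, q, hqC, ?_, ?_, c3⟩ <;>
          (rw [Fin.lt_def]; omega)
      · exact hncr X hX' D hD hXD ⟨i, hi, p, hp, k, hkD, q, hqD, c1, c2, c3⟩
    · exact hncr X hX' Y hY' hXY hcr
  have hNC' : γ' ∈ NC n := ⟨hne', hcov', hncr'⟩
  -- cardinality
  have hCUD : C ∪ D ∉ (γ.erase C).erase D := by
    intro hm
    rw [mem_erase, mem_erase] at hm
    exact hm.2.1 (huB hm.2.2 hC (mem_union_left _ heC) heC)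
  have hDe : D ∈ γ.erase C := mem_erase.2 ⟨Ne.symm hCD, hD⟩
  have hcard' : γ'.card + 1 = γ.card := by
    rw [hγ', card_insert_of_notMem hCUD, card_erase_of_mem hDe, card_erase_of_mem hC]
    omega
  -- relation comparison
  have hsub : ∀ i j : Fin n, rel γ' i j → rel γ i j := by
    intro i j h B hB hmeet
    by_cases hBCD : B = C ∨ B = D
    · have hBsub : B ⊆ C ∪ D := by
        rcases hBCD with rfl | rfl
        · exact subset_union_left
        · exact subset_union_right
      obtain ⟨x, hxB, hx⟩ := hmeet
      intro z hz
      exact h (C ∪ D) ((hmem' _).2 (Or.inl rfl)) ⟨x, hBsub hxB, hx⟩ z (hBsub hz)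
    · push_neg at hBCD
      exact h B ((hmem' _).2 (Or.inr ⟨hB, hBCD.1, hBCD.2⟩)) hmeet
  have hbreak : ∀ i j : Fin n, rel γ i j → ¬ rel γ' i j → i = e ∨ j = e := by
    intro i j hr hr'
    unfold rel at hr'
    push_neg at hr'
    obtain ⟨B, hB, hmeet, x, hxB, hx⟩ := hr'
    rcases (hmem' B).1 hB with rfl | ⟨hBγ, -, -⟩
    · obtain ⟨y, hyB, hy⟩ := hmeet
      have hCc : (∃ z ∈ C, inIv i j z) → ∀ z ∈ C, inIv i j z := hr C hC
      have hDc : (∃ z ∈ D, inIv i j z) → ∀ z ∈ D, inIv i j z := hr D hD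
      rcases mem_union.1 hyB with hyC | hyD
      · rcases mem_union.1 hxB with hxC | hxD
        · exact absurd (hCc ⟨y, hyC, hy⟩ x hxC) hx
        · have h_e : inIv i j e := hCc ⟨y, hyC, hy⟩ e heC
          have h_d : ¬ inIv i j d := fun h => hx (hDc ⟨d, hdmem, h⟩ x hxD)
          rw [inIv_iff] at h_e h_d
          simp only [Fin.ext_iff]
          omega
      · rcases mem_union.1 hxB with hxC | hxD
        · have h_d : inIv i j d := hDc ⟨y, hyD, hy⟩ d hdmem
          have h_e : ¬ inIv i j e := fun h => hx (hCc ⟨e, heC, h⟩ x hxC)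
          rw [inIv_iff] at h_e h_d
          simp only [Fin.ext_iff]
          omega
        · exact absurd (hDc ⟨y, hyD, hy⟩ x hxD) hx
    · exact absurd (hr B hBγ hmeet x hxB) hx
  -- the old relation joins e and M, the new one does not
  have hMrel : rel γ e M := by
    rintro B hB ⟨y, hyB, hy⟩ x hxB
    rw [inIv_iff] at hy
    have hyD : y ∈ D := hint y (Fin.le_def.2 (by omega)) (Fin.le_def.2 (by omega))
    have hBD : B = D := huB hB hD hyB hyD
    subst hBD
    have hx1 := Fin.le_def.1 (hDmem x hxB).1
    have hx2 := Fin.le_def.1 (hDmem x hxB).2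
    rw [inIv_iff]
    omega
  have hMnrel : ¬ rel γ' e M := by
    intro h
    have hin : inIv e M d := by rw [inIv_iff]; omega
    have := h (C ∪ D) ((hmem' _).2 (Or.inl rfl)) ⟨d, mem_union_right _ hdmem, hin⟩
      e (mem_union_left _ heC)
    rw [inIv_iff] at this
    omega
  have heMne : e ≠ M := fun h => absurd (congrArg Fin.val h) (by omega)
  -- splitting the class of e
  have hK₁K : ∀ x, x ∈ cls γ' e → x ∈ cls γ e :=
    fun x hx => mem_cls.2 (hsub _ _ (mem_cls.1 hx))
  have hK₂K : ∀ x, x ∈ cls γ' M → x ∈ cls γ e :=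
    fun x hx => mem_cls.2 (rel_trans hMrel (hsub _ _ (mem_cls.1 hx)))
  have hsplit : ∀ x, x ∈ cls γ e → x ∉ cls γ' e → x ∈ cls γ' M := by
    intro x hxK hx1
    rw [mem_cls] at hxK hx1 ⊢
    have hxM : rel γ M x := rel_trans (rel_symm hMrel) hxK
    by_contra hcon
    rcases hbreak M x hxM hcon with h | rfl
    · exact heMne h.symm
    · exact hx1 (rel_refl _ _)
  have hK12 : ∀ x, x ∈ cls γ' e → x ∈ cls γ' M → False := by
    intro x h1x h2x
    exact hMnrel (rel_trans (mem_cls.1 h1x) (rel_symm (mem_cls.1 h2x)))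
  -- minima bookkeeping
  have hmsub : mins γ ⊆ mins γ' := by
    intro x hx
    rw [mem_mins] at hx ⊢
    exact fun j hj => hx j (hsub _ _ hj)
  have hKne : (cls γ e).Nonempty := ⟨e, self_mem_cls⟩
  set m := (cls γ e).min' hKne with hm
  have hmK : m ∈ cls γ e := min'_mem _ _
  have hmmins : m ∈ mins γ := by
    rw [mem_mins]
    intro j hj
    exact min'_le _ _ (mem_cls.2 (rel_trans (mem_cls.1 hmK) hj))
  set m₁ := (cls γ' e).min' ⟨e, self_mem_cls⟩ with hm₁
  set m₂ := (cls γ' M).min' ⟨M, self_mem_cls⟩ with hm₂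
  have hm₁K₁ : m₁ ∈ cls γ' e := min'_mem _ _
  have hm₂K₂ : m₂ ∈ cls γ' M := min'_mem _ _
  have hm₁mins : m₁ ∈ mins γ' := by
    rw [mem_mins]
    intro j hj
    exact min'_le _ _ (mem_cls.2 (rel_trans (mem_cls.1 hm₁K₁) hj))
  have hm₂mins : m₂ ∈ mins γ' := by
    rw [mem_mins]
    intro j hj
    exact min'_le _ _ (mem_cls.2 (rel_trans (mem_cls.1 hm₂K₂) hj))
  have hm₁₂ : m₁ ≠ m₂ := fun h => hK12 m₁ hm₁K₁ (h ▸ hm₂K₂)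
  have honly : ¬(m₁ ∈ mins γ ∧ m₂ ∈ mins γ) := by
    rintro ⟨ha, hb⟩
    have hr12 : rel γ m₁ m₂ :=
      rel_trans (rel_symm (mem_cls.1 (hK₁K _ hm₁K₁))) (mem_cls.1 (hK₂K _ hm₂K₂))
    rw [mem_mins] at ha hb
    exact hm₁₂ (le_antisymm (ha _ hr12) (hb _ (rel_symm hr12)))
  have hchar : ∀ x ∈ mins γ', x ∉ mins γ → x = m₁ ∨ x = m₂ := by
    intro x hx' hx
    rw [mem_mins] at hx'
    rw [mem_mins] at hx
    push_neg at hx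
    obtain ⟨j, hj, hji⟩ := hx
    have hj' : ¬ rel γ' x j := fun h => absurd (hx' j h) (not_le.2 hji)
    have hxK : x ∈ cls γ e := by
      rcases hbreak x j hj hj' with rfl | rfl
      · exact self_mem_cls
      · exact mem_cls.2 (rel_symm hj)
    by_cases hx1 : x ∈ cls γ' e
    · exact Or.inl (le_antisymm
        (hx' m₁ (rel_trans (rel_symm (mem_cls.1 hx1)) (mem_cls.1 hm₁K₁)))
        (min'_le _ _ hx1))
    · have hx2 := hsplit x hxK hx1
      exact Or.inr (le_antisymm
        (hx' m₂ (rel_trans (rel_symm (mem_cls.1 hx2)) (mem_cls.1 hm₂K₂)))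
        (min'_le _ _ hx2))
  have hmcase : m = m₁ ∨ m = m₂ := by
    by_cases h1 : m ∈ cls γ' e
    · exact Or.inl (le_antisymm (min'_le _ _ (hK₁K _ hm₁K₁)) (min'_le _ _ h1))
    · have hm2 := hsplit m hmK h1
      exact Or.inr (le_antisymm (min'_le _ _ (hK₂K _ hm₂K₂)) (min'_le _ _ hm2))
  refine ⟨γ', hNC', hcard', ?_⟩
  rcases hmcase with hmeq | hmeq
  · have hm₁' : m₁ ∈ mins γ := by rw [← hmeq]; exact hmmins
    have hm₂not : m₂ ∉ mins γ := fun h => honly ⟨hm₁', h⟩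
    have hset : mins γ' = insert m₂ (mins γ) := by
      apply Subset.antisymm
      · intro x hx
        by_cases hxm : x ∈ mins γ
        · exact mem_insert_of_mem hxm
        · rcases hchar x hx hxm with rfl | rfl
          · exact absurd hm₁' hxm
          · exact mem_insert_self _ _
      · intro x hx
        rcases mem_insert.1 hx with rfl | hx
        · exact hm₂mins
        · exact hmsub hx
    rw [hset, card_insert_of_notMem hm₂not]
  · have hm₂' : m₂ ∈ mins γ := by rw [← hmeq]; exact hmmins
    have hm₁not : m₁ ∉ mins γ := fun h => honly ⟨h, hm₂'⟩
    have hset : mins γ' = insert m₁ (mins γ) := by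
      apply Subset.antisymm
      · intro x hx
        by_cases hxm : x ∈ mins γ
        · exact mem_insert_of_mem hxm
        · rcases hchar x hx hxm with rfl | rfl
          · exact mem_insert_self _ _
          · exact absurd hm₂' hxm
      · intro x hx
        rcases mem_insert.1 hx with rfl | hx
        · exact hm₁mins
        · exact hmsub hx
    rw [hset, card_insert_of_notMem hm₁not]

lemma card_ne_zero_of_NC (hn : 1 ≤ n) {γ : Finset (Finset (Fin n))} (hγ : γ ∈ NC n) :
    γ.card ≠ 0 := by
  intro h0
  obtain ⟨B, ⟨hB, _⟩, _⟩ := hγ.2.1 ⟨0, hn⟩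
  rw [card_eq_zero] at h0
  subst h0
  exact absurd hB (notMem_empty _)

lemma count_base {γ : Finset (Finset (Fin n))} (hγ : γ ∈ NC n) (hone : γ.card = 1) : (mins γ).card = n := by
  obtain ⟨B, rfl⟩ := card_eq_one.1 hone
  have huniv : ∀ a : Fin n, a ∈ B := by
    intro a
    obtain ⟨B', ⟨hB', haB'⟩, _⟩ := hγ.2.1 a
    rw [mem_singleton] at hB'
    rwa [← hB']
  have hmins : mins {B} = univ := by
    apply eq_univ_of_forall
    intro i
    rw [mem_mins]
    intro j hrel
    by_contra hij
    rw [Fin.le_def] at hij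
    have hii : inIv i j i := by rw [inIv_iff]; omega
    have h1 := hrel B (mem_singleton_self B) ⟨i, huniv i, hii⟩ j (huniv j)
    rw [inIv_iff] at h1
    omega
  rw [hmins, card_univ, Fintype.card_fin]

lemma count_aux (hn : 1 ≤ n) :
    ∀ k, ∀ γ : Finset (Finset (Fin n)), γ.card ≤ k → γ ∈ NC n →
      γ.card + (mins γ).card = n + 1 := by
  intro k
  induction k with
  | zero =>
    intro γ hk hγ
    exact absurd (Nat.le_zero.1 hk) (card_ne_zero_of_NC hn hγ)
  | succ k ih =>
    intro γ hk hγ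
    rcases lt_or_ge γ.card 2 with hlt | hge
    · have h0 := card_ne_zero_of_NC hn hγ
      have hone : γ.card = 1 := by omega
      rw [hone, count_base hγ hone, Nat.add_comm]
    · obtain ⟨γ', hγ', hcard, hmins⟩ := step γ hγ hge
      have h := ih γ' (by omega) hγ'
      omega

lemma count (hn : 1 ≤ n) (γ : Finset (Finset (Fin n))) (hγ : γ ∈ NC n) :
    γ.card + (krew γ).card = n + 1 := by
  rw [krew_card]
  exact count_aux hn γ.card γ le_rfl hγ

end KP

/-- for every non-crossing partition `γ` of {1,…,n}, the number of blocks
of `γ` plus the number of blocks of its Kreweras complement equals `n + 1`. -/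
theorem stmt0 (n : ℕ) (hn : 1 ≤ n) (γ σ : Finset (Finset (Fin n)))
    (hγ : γ ∈ NC n) (hσ : IsKreweras γ σ) :
    γ.card + σ.card = n + 1 := by
  have hkr : IsKreweras γ (KP.krew γ) :=
    ⟨KP.krew_mem_NC γ, KP.interlace_krew γ hγ, fun τ hτ hnc => KP.krew_max γ hγ τ hτ hnc⟩
  have hσk : σ = KP.krew γ :=
    KP.ncle_antisymm hσ.1 (KP.krew_mem_NC γ)
      (hkr.2.2 σ hσ.1 hσ.2.1) (hσ.2.2 (KP.krew γ) hkr.1 hkr.2.1)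
  rw [hσk]
  exact KP.count hn γ hγ
end

section
/- The Kreweras complement map Kr : NC(n) → NC(n) is a bijection, and it is order-reversing: if π ≤ σ in the reversed refinement order, then Kr(σ) ≤ Kr(π). -/
open Finset

namespace KrAux

variable {n : ℕ}

/-- circular distance from `a` to `b` -/
def dd (a b : Fin n) : ℕ := (b.1 + n - a.1) % n

lemma dd_lt (a b : Fin n) : dd a b < n := Nat.mod_lt _ (by have := a.2; omega)

lemma dd_eq (a b : Fin n) : dd a b = if a.1 ≤ b.1 then b.1 - a.1 else b.1 + n - a.1 := by
  have ha := a.2; have hb := b.2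
  unfold dd
  split
  · have h : b.1 + n - a.1 = (b.1 - a.1) + n := by omega
    rw [h, Nat.add_mod_right, Nat.mod_eq_of_lt (by omega)]
  · rw [Nat.mod_eq_of_lt (by omega)]

lemma dd_self (a : Fin n) : dd a a = 0 := by simp [dd_eq]

lemma dd_eq_zero_iff {a b : Fin n} : dd a b = 0 ↔ a = b := by
  have ha := a.2; have hb := b.2
  rw [dd_eq, Fin.ext_iff]; split <;> omega

lemma dd_inj {w a b : Fin n} (h : dd w a = dd w b) : a = b := by
  have ha := a.2; have hb := b.2; have hw := w.2
  rw [dd_eq, dd_eq] at h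
  rw [Fin.ext_iff]
  split at h <;> split at h <;> omega

lemma dd_sub {u a z : Fin n} (h : dd u a ≤ dd u z) : dd a z = dd u z - dd u a := by
  have ha := a.2; have hz := z.2; have hu := u.2
  simp only [dd_eq] at h ⊢
  split at h <;> split at h <;> split <;> omega

lemma dd_sub' {u a z : Fin n} (h : dd u z < dd u a) : dd a z = dd u z + n - dd u a := by
  have ha := a.2; have hz := z.2; have hu := u.2
  simp only [dd_eq] at h ⊢
  split at h <;> split at h <;> split <;> omega

def succC (a : Fin n) : Fin n := ⟨(a.1 + 1) % n, Nat.mod_lt _ (by have := a.2; omega)⟩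
def predC (a : Fin n) : Fin n := ⟨(a.1 + n - 1) % n, Nat.mod_lt _ (by have := a.2; omega)⟩

lemma succC_val (a : Fin n) : (succC a).1 = if a.1 + 1 = n then 0 else a.1 + 1 := by
  have := a.2
  simp only [succC]
  split
  · simp [*]
  · rw [Nat.mod_eq_of_lt (by omega)]

lemma predC_val (a : Fin n) : (predC a).1 = if a.1 = 0 then n - 1 else a.1 - 1 := by
  have := a.2
  simp only [predC]
  split
  · rename_i h
    have h2 : a.1 + n - 1 = n - 1 := by omega
    rw [h2, Nat.mod_eq_of_lt (by omega)]
  · have h : a.1 + n - 1 = (a.1 - 1) + n := by omega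
    rw [h, Nat.add_mod_right, Nat.mod_eq_of_lt (by omega)]

lemma succC_predC (a : Fin n) : succC (predC a) = a := by
  have := a.2
  have hp := predC_val a
  apply Fin.ext
  rw [succC_val]
  rcases eq_or_ne a.1 0 with h | h
  · rw [if_pos h] at hp
    rw [if_pos (by omega)]
    omega
  · rw [if_neg h] at hp
    rw [if_neg (by omega)]
    omega

lemma predC_inj {a b : Fin n} (h : predC a = predC b) : a = b := by
  have h2 : succC (predC a) = succC (predC b) := by rw [h]
  rwa [succC_predC, succC_predC] at h2

lemma dd_succC_self (u : Fin n) (h : 1 < n) : dd u (succC u) = 1 := by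
  have := u.2
  rw [dd_eq, succC_val]
  split <;> split <;> omega

lemma dd_succC {u v : Fin n} (h : succC v ≠ u) : dd u (succC v) = dd u v + 1 := by
  have hu := u.2; have hv := v.2
  have hne : (succC v).1 ≠ u.1 := fun hh => h (Fin.ext hh)
  have hs := succC_val v
  have h1 := dd_eq u (succC v)
  have h2 := dd_eq u v
  rw [hs] at h1 hne
  by_cases hc : v.1 + 1 = n
  · rw [if_pos hc] at h1 hne
    rw [h1, h2]
    split <;> split <;> omega
  · rw [if_neg hc] at h1 hne
    rw [h1, h2]
    split <;> split <;> omega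

lemma val_of_dd (w z : Fin n) : z.1 = w.1 + dd w z ∨ z.1 + n = w.1 + dd w z := by
  have := w.2; have := z.2
  rw [dd_eq]; split <;> omega


-- chunk 2
def cIoc (a b : Fin n) : Finset (Fin n) :=
  univ.filter (fun z => 0 < dd a z ∧ dd a z ≤ dd a b)

lemma mem_cIoc {a b z : Fin n} : z ∈ cIoc a b ↔ 0 < dd a z ∧ dd a z ≤ dd a b := by
  simp [cIoc]

lemma dd_pos {a b : Fin n} (h : a ≠ b) : 0 < dd a b :=
  Nat.pos_of_ne_zero (fun hh => h (dd_eq_zero_iff.mp hh))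

lemma cIoc_compl {u v z : Fin n} (h : u ≠ v) : z ∈ cIoc v u ↔ z ∉ cIoc u v := by
  have hD : 0 < dd u v := dd_pos h
  have hDn := dd_lt u v
  have hzn := dd_lt u z
  have h0 : dd u u = 0 := dd_self u
  have h1 : dd v u = n - dd u v := by
    rw [dd_sub' (show dd u u < dd u v by omega), h0]
    omega
  rw [mem_cIoc, mem_cIoc, h1]
  rcases le_or_gt (dd u v) (dd u z) with hc | hc
  · rw [dd_sub hc]; omega
  · rw [dd_sub' hc]; omega

lemma cIoc_lt {a b : Fin n} (h : a.1 < b.1) : cIoc a b = Finset.Ioc a b := by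
  ext z
  have ha := a.2; have hb := b.2; have hz := z.2
  simp only [mem_cIoc, Finset.mem_Ioc, Fin.lt_def, Fin.le_def, dd_eq]
  split <;> split <;> omega

lemma cIoc_gt {a b : Fin n} (h : b.1 < a.1) : ∀ z, z ∈ cIoc a b ↔ z ∉ Finset.Ioc b a := by
  intro z
  have ha := a.2; have hb := b.2; have hz := z.2
  simp only [mem_cIoc, Finset.mem_Ioc, Fin.lt_def, Fin.le_def, dd_eq, not_and, not_le]
  split <;> split <;> omega

lemma block_unique {P : Finset (Finset (Fin n))} (hP : P ∈ NC n) {B D : Finset (Fin n)}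
    (hB : B ∈ P) (hD : D ∈ P) {a : Fin n} (haB : a ∈ B) (haD : a ∈ D) : B = D := by
  obtain ⟨-, hex, -⟩ := hP
  obtain ⟨E, -, hu⟩ := hex a
  rw [hu B ⟨hB, haB⟩, hu D ⟨hD, haD⟩]

lemma exists_block {P : Finset (Finset (Fin n))} (hP : P ∈ NC n) (a : Fin n) :
    ∃ B ∈ P, a ∈ B := by
  obtain ⟨-, hex, -⟩ := hP
  obtain ⟨E, ⟨hE, haE⟩, -⟩ := hex a
  exact ⟨E, hE, haE⟩

lemma cross_of_circ {γ : Finset (Finset (Fin n))} (hnc : IsNonCrossing γ)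
    {B D : Finset (Fin n)} (hB : B ∈ γ) (hD : D ∈ γ) (hBD : B ≠ D)
    {w p1 p2 p3 p4 : Fin n} (m1 : p1 ∈ B) (m2 : p2 ∈ D) (m3 : p3 ∈ B) (m4 : p4 ∈ D)
    (o1 : dd w p1 < dd w p2) (o2 : dd w p2 < dd w p3) (o3 : dd w p3 < dd w p4) : False := by
  have hcBD := hnc B hB D hD hBD
  have hcDB := hnc D hD B hB (Ne.symm hBD)
  have cross1 : ∀ {a c b d : Fin n}, a ∈ B → c ∈ B → b ∈ D → d ∈ D →
      a.1 < b.1 → b.1 < c.1 → c.1 < d.1 → False := by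
    intro a c b d ha hc hb hd h1 h2 h3
    exact hcBD ⟨a, ha, c, hc, b, hb, d, hd, Fin.lt_def.mpr h1, Fin.lt_def.mpr h2, Fin.lt_def.mpr h3⟩
  have cross2 : ∀ {a c b d : Fin n}, a ∈ D → c ∈ D → b ∈ B → d ∈ B →
      a.1 < b.1 → b.1 < c.1 → c.1 < d.1 → False := by
    intro a c b d ha hc hb hd h1 h2 h3
    exact hcDB ⟨a, ha, c, hc, b, hb, d, hd, Fin.lt_def.mpr h1, Fin.lt_def.mpr h2, Fin.lt_def.mpr h3⟩
  have v1 := val_of_dd w p1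
  have v2 := val_of_dd w p2
  have v3 := val_of_dd w p3
  have v4 := val_of_dd w p4
  have n1 := p1.2; have n2 := p2.2; have n3 := p3.2; have n4 := p4.2
  have l1 := dd_lt w p1; have l2 := dd_lt w p2; have l3 := dd_lt w p3; have l4 := dd_lt w p4
  have nw := w.2
  rcases v1 with v1 | v1 <;> rcases v2 with v2 | v2 <;> rcases v3 with v3 | v3 <;>
      rcases v4 with v4 | v4 <;>
    first
      | omega
      | exact cross1 m1 m3 m2 m4 (by omega) (by omega) (by omega)
      | exact cross1 m3 m1 m4 m2 (by omega) (by omega) (by omega)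
      | exact cross2 m4 m2 m1 m3 (by omega) (by omega) (by omega)
      | exact cross2 m2 m4 m3 m1 (by omega) (by omega) (by omega)

end KrAux


namespace KrAux

open scoped Classical

variable {n : ℕ}

/-- the "no block separates" relation -/
def relC (γ : Finset (Finset (Fin n))) (a b : Fin n) : Prop :=
  ∀ B ∈ γ, (∀ z ∈ B, z ∈ cIoc a b) ∨ (∀ z ∈ B, z ∉ cIoc a b)

lemma cIoc_self (a : Fin n) : cIoc a a = ∅ := by
  ext z
  simp only [mem_cIoc, dd_self, Finset.notMem_empty, iff_false, not_and]
  omega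

lemma relC_refl (γ : Finset (Finset (Fin n))) (a : Fin n) : relC γ a a := by
  intro B _; right; intro z _; simp [cIoc_self]

lemma relC_symm {γ : Finset (Finset (Fin n))} {a b : Fin n} (h : relC γ a b) : relC γ b a := by
  rcases eq_or_ne a b with rfl | hab
  · exact h
  intro B hB
  rcases h B hB with c | c
  · right; intro z hz hc
    exact (cIoc_compl hab).mp hc (c z hz)
  · left; intro z hz
    exact (cIoc_compl hab).mpr (c z hz)

lemma relC_trans {γ : Finset (Finset (Fin n))} {i j k : Fin n}
    (h1 : relC γ i j) (h2 : relC γ j k) : relC γ i k := by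
  intro B hB
  rcases Finset.eq_empty_or_nonempty B with rfl | ⟨z0, hz0⟩
  · left; intro z hz; exact absurd hz (Finset.notMem_empty z)
  have c1 := h1 B hB; have c2 := h2 B hB
  have rj : ∀ X : Fin n, dd j X =
      if dd i j ≤ dd i X then dd i X - dd i j else dd i X + n - dd i j := by
    intro X
    rcases le_or_gt (dd i j) (dd i X) with hc | hc
    · rw [dd_sub hc, if_pos hc]
    · rw [dd_sub' hc, if_neg (not_le.mpr hc)]
  have key : ∀ z ∈ B, (z ∈ cIoc i k ↔ z0 ∈ cIoc i k) := by
    intro z hz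
    have e1 : (z ∈ cIoc i j ↔ z0 ∈ cIoc i j) := by
      rcases c1 with c | c
      · simp [c z hz, c z0 hz0]
      · simp [c z hz, c z0 hz0]
    have e2 : (z ∈ cIoc j k ↔ z0 ∈ cIoc j k) := by
      rcases c2 with c | c
      · simp [c z hz, c z0 hz0]
      · simp [c z hz, c z0 hz0]
    have hA := dd_lt i j; have hK := dd_lt i k
    have hz1 := dd_lt i z; have hz2 := dd_lt i z0
    simp only [mem_cIoc] at e1 e2 ⊢
    rw [rj z, rj z0, rj k] at e2
    split at e2 <;> split at e2 <;> split at e2 <;> omega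
  by_cases h0 : z0 ∈ cIoc i k
  · left; intro z hz; exact (key z hz).mpr h0
  · right; intro z hz hc; exact h0 ((key z hz).mp hc)

lemma quad {γ : Finset (Finset (Fin n))} {a b c d : Fin n} (rac : relC γ a c) (rbd : relC γ b d)
    (h1 : a < b) (h2 : b < c) (h3 : c < d) : relC γ a b := by
  have hab : a.1 < b.1 := h1
  have hbc : b.1 < c.1 := h2
  have hcd : c.1 < d.1 := h3
  have eac : cIoc a c = Finset.Ioc a c := cIoc_lt (by omega)
  have ebd : cIoc b d = Finset.Ioc b d := cIoc_lt (by omega)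
  have eab : cIoc a b = Finset.Ioc a b := cIoc_lt (by omega)
  have mIoc : ∀ (x y z : Fin n), z ∈ Finset.Ioc x y ↔ (x.1 < z.1 ∧ z.1 ≤ y.1) := by
    intro x y z
    rw [Finset.mem_Ioc]
    exact and_congr Fin.lt_def Fin.le_def
  intro B hB
  have c1 := rac B hB; have c2 := rbd B hB
  rw [eac] at c1; rw [ebd] at c2; rw [eab]
  rcases c1 with c1 | c1 <;> rcases c2 with c2 | c2
  · right; intro z hz
    have m1 := (mIoc a c z).mp (c1 z hz)
    have m2 := (mIoc b d z).mp (c2 z hz)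
    rw [mIoc]; omega
  · left; intro z hz
    have m1 := (mIoc a c z).mp (c1 z hz)
    have m2 := c2 z hz
    rw [mIoc] at m2 ⊢; omega
  · right; intro z hz
    have m2 := (mIoc b d z).mp (c2 z hz)
    have m1 := c1 z hz
    rw [mIoc] at m1 ⊢; omega
  · right; intro z hz
    have m1 := c1 z hz
    have m2 := c2 z hz
    rw [mIoc] at m1 m2 ⊢; omega

noncomputable def cls (γ : Finset (Finset (Fin n))) (i : Fin n) : Finset (Fin n) :=
  univ.filter (fun j => relC γ i j)

noncomputable def K (γ : Finset (Finset (Fin n))) : Finset (Finset (Fin n)) :=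
  univ.image (cls γ)

lemma mem_cls {γ : Finset (Finset (Fin n))} {i j : Fin n} : j ∈ cls γ i ↔ relC γ i j := by
  simp [cls]

lemma cls_eq {γ : Finset (Finset (Fin n))} {i j : Fin n} (h : relC γ i j) :
    cls γ i = cls γ j := by
  ext z
  simp only [mem_cls]
  exact ⟨fun hz => relC_trans (relC_symm h) hz, fun hz => relC_trans h hz⟩

lemma K_mem (γ : Finset (Finset (Fin n))) : K γ ∈ NC n := by
  refine ⟨?_, ?_, ?_⟩
  · rintro B hB
    obtain ⟨i, -, rfl⟩ := Finset.mem_image.mp hB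
    exact ⟨i, mem_cls.mpr (relC_refl γ i)⟩
  · intro a
    refine ⟨cls γ a, ⟨Finset.mem_image_of_mem _ (Finset.mem_univ a),
      mem_cls.mpr (relC_refl γ a)⟩, ?_⟩
    rintro D ⟨hD, haD⟩
    obtain ⟨i, -, rfl⟩ := Finset.mem_image.mp hD
    exact cls_eq (mem_cls.mp haD)
  · rintro B hB D hD hBD hcross
    obtain ⟨i, -, rfl⟩ := Finset.mem_image.mp hB
    obtain ⟨j, -, rfl⟩ := Finset.mem_image.mp hD
    obtain ⟨a, ha, c, hc, b, hb, d, hd, h1, h2, h3⟩ := hcross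
    have rac : relC γ a c := relC_trans (relC_symm (mem_cls.mp ha)) (mem_cls.mp hc)
    have rbd : relC γ b d := relC_trans (relC_symm (mem_cls.mp hb)) (mem_cls.mp hd)
    have rab : relC γ a b := quad rac rbd h1 h2 h3
    have rij : relC γ i j :=
      relC_trans (relC_trans (mem_cls.mp ha) rab) (relC_symm (mem_cls.mp hb))
    exact hBD (cls_eq rij)


lemma oddE_val (i : Fin n) : (oddE n i).1 = 2 * i.1 := rfl
lemma evenE_val (i : Fin n) : (evenE n i).1 = 2 * i.1 + 1 := rfl

lemma oddE_inj : Function.Injective (oddE n) := by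
  intro a b h
  have h2 : 2 * a.1 = 2 * b.1 := congrArg Fin.val h
  exact Fin.ext (by omega)

lemma odd_ne_even {B D : Finset (Fin n)} (hB : B.Nonempty) :
    B.image (oddE n) ≠ D.image (evenE n) := by
  intro he
  obtain ⟨b, hb⟩ := hB
  have h1 : oddE n b ∈ D.image (evenE n) := he ▸ Finset.mem_image_of_mem _ hb
  obtain ⟨d, -, hd⟩ := Finset.mem_image.mp h1
  have h2 : 2 * d.1 + 1 = 2 * b.1 := congrArg Fin.val hd
  omega

lemma lt_oo {x y : Fin n} : oddE n x < oddE n y ↔ x < y := by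
  rw [Fin.lt_def, Fin.lt_def, oddE_val, oddE_val]; omega
lemma lt_oe {x y : Fin n} : oddE n x < evenE n y ↔ x ≤ y := by
  rw [Fin.lt_def, Fin.le_def, oddE_val, evenE_val]; omega
lemma lt_eo {x y : Fin n} : evenE n x < oddE n y ↔ x < y := by
  rw [Fin.lt_def, Fin.lt_def, evenE_val, oddE_val]; omega
lemma lt_ee {x y : Fin n} : evenE n x < evenE n y ↔ x < y := by
  rw [Fin.lt_def, Fin.lt_def, evenE_val, evenE_val]; omega

lemma mem_Ioc_val {x y z : Fin n} : z ∈ Finset.Ioc x y ↔ (x.1 < z.1 ∧ z.1 ≤ y.1) := by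
  rw [Finset.mem_Ioc]; exact and_congr Fin.lt_def Fin.le_def

def Mixed (γ σ : Finset (Finset (Fin n))) : Prop :=
  ∀ B ∈ γ, ∀ D ∈ σ, ∀ d1 ∈ D, ∀ d2 ∈ D, d1 < d2 →
    (∀ z ∈ B, z ∈ Finset.Ioc d1 d2) ∨ (∀ z ∈ B, z ∉ Finset.Ioc d1 d2)

lemma interlace_nc_iff {γ σ : Finset (Finset (Fin n))}
    (hγ : ∀ B ∈ γ, B.Nonempty) (hσ : ∀ D ∈ σ, D.Nonempty) :
    IsNonCrossing (interlace γ σ) ↔ IsNonCrossing γ ∧ IsNonCrossing σ ∧ Mixed γ σ := by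
  constructor
  · intro h
    refine ⟨?_, ?_, ?_⟩
    · intro B hB D hD hBD hcr
      obtain ⟨i, hi, p, hp, k, hk, q, hq, l1, l2, l3⟩ := hcr
      refine h (B.image (oddE n)) (Finset.mem_union_left _ (Finset.mem_image_of_mem _ hB))
        (D.image (oddE n)) (Finset.mem_union_left _ (Finset.mem_image_of_mem _ hD))
        (fun he => hBD (Finset.image_injective oddE_inj he)) ?_
      exact ⟨oddE n i, Finset.mem_image_of_mem _ hi, oddE n p, Finset.mem_image_of_mem _ hp,
        oddE n k, Finset.mem_image_of_mem _ hk, oddE n q, Finset.mem_image_of_mem _ hq,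
        lt_oo.mpr l1, lt_oo.mpr l2, lt_oo.mpr l3⟩
    · intro B hB D hD hBD hcr
      obtain ⟨i, hi, p, hp, k, hk, q, hq, l1, l2, l3⟩ := hcr
      refine h (B.image (evenE n)) (Finset.mem_union_right _ (Finset.mem_image_of_mem _ hB))
        (D.image (evenE n)) (Finset.mem_union_right _ (Finset.mem_image_of_mem _ hD))
        (fun he => hBD (Finset.image_injective (fun a b hab => by
          have h2 : 2 * a.1 + 1 = 2 * b.1 + 1 := congrArg Fin.val hab
          exact Fin.ext (by omega)) he)) ?_
      exact ⟨evenE n i, Finset.mem_image_of_mem _ hi, evenE n p, Finset.mem_image_of_mem _ hp,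
        evenE n k, Finset.mem_image_of_mem _ hk, evenE n q, Finset.mem_image_of_mem _ hq,
        lt_ee.mpr l1, lt_ee.mpr l2, lt_ee.mpr l3⟩
    · intro B hB D hD d1 hd1 d2 hd2 h12
      by_contra hcon
      push_neg at hcon
      obtain ⟨⟨b2, hb2, hb2n⟩, b1, hb1, hb1m⟩ := hcon
      rw [mem_Ioc_val] at hb1m
      have h12' : d1.1 < d2.1 := h12
      have hb2n' : b2.1 ≤ d1.1 ∨ d2.1 < b2.1 := by
        rw [mem_Ioc_val] at hb2n; omega
      rcases hb2n' with hc | hc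
      · exact h (B.image (oddE n)) (Finset.mem_union_left _ (Finset.mem_image_of_mem _ hB))
          (D.image (evenE n)) (Finset.mem_union_right _ (Finset.mem_image_of_mem _ hD))
          (odd_ne_even ⟨b1, hb1⟩)
          ⟨oddE n b2, Finset.mem_image_of_mem _ hb2, oddE n b1, Finset.mem_image_of_mem _ hb1,
            evenE n d1, Finset.mem_image_of_mem _ hd1, evenE n d2, Finset.mem_image_of_mem _ hd2,
            lt_oe.mpr (Fin.le_def.mpr hc), lt_eo.mpr (Fin.lt_def.mpr (by omega)),
            lt_oe.mpr (Fin.le_def.mpr (by omega))⟩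
      · exact h (D.image (evenE n)) (Finset.mem_union_right _ (Finset.mem_image_of_mem _ hD))
          (B.image (oddE n)) (Finset.mem_union_left _ (Finset.mem_image_of_mem _ hB))
          (Ne.symm (odd_ne_even ⟨b1, hb1⟩))
          ⟨evenE n d1, Finset.mem_image_of_mem _ hd1, evenE n d2, Finset.mem_image_of_mem _ hd2,
            oddE n b1, Finset.mem_image_of_mem _ hb1, oddE n b2, Finset.mem_image_of_mem _ hb2,
            lt_eo.mpr (Fin.lt_def.mpr (by omega)), lt_oe.mpr (Fin.le_def.mpr (by omega)),
            lt_eo.mpr (Fin.lt_def.mpr (by omega))⟩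
  · rintro ⟨hg, hs, hm⟩ X hX Y hY hXY hcr
    obtain ⟨i, hi, p, hp, k, hk, q, hq, l1, l2, l3⟩ := hcr
    rcases Finset.mem_union.mp hX with hX' | hX' <;> rcases Finset.mem_union.mp hY with hY' | hY'
    · obtain ⟨B, hB, rfl⟩ := Finset.mem_image.mp hX'
      obtain ⟨D, hD, rfl⟩ := Finset.mem_image.mp hY'
      obtain ⟨bi, hbi, rfl⟩ := Finset.mem_image.mp hi
      obtain ⟨bp, hbp, rfl⟩ := Finset.mem_image.mp hp
      obtain ⟨dk, hdk, rfl⟩ := Finset.mem_image.mp hk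
      obtain ⟨dq, hdq, rfl⟩ := Finset.mem_image.mp hq
      exact hg B hB D hD (fun he => hXY (by rw [he]))
        ⟨bi, hbi, bp, hbp, dk, hdk, dq, hdq, lt_oo.mp l1, lt_oo.mp l2, lt_oo.mp l3⟩
    · obtain ⟨B, hB, rfl⟩ := Finset.mem_image.mp hX'
      obtain ⟨D, hD, rfl⟩ := Finset.mem_image.mp hY'
      obtain ⟨b2, hb2, rfl⟩ := Finset.mem_image.mp hi
      obtain ⟨b1, hb1, rfl⟩ := Finset.mem_image.mp hp
      obtain ⟨d1, hd1, rfl⟩ := Finset.mem_image.mp hk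
      obtain ⟨d2, hd2, rfl⟩ := Finset.mem_image.mp hq
      have v1 : b2.1 ≤ d1.1 := Fin.le_def.mp (lt_oe.mp l1)
      have v2 : d1.1 < b1.1 := Fin.lt_def.mp (lt_eo.mp l2)
      have v3 : b1.1 ≤ d2.1 := Fin.le_def.mp (lt_oe.mp l3)
      rcases hm B hB D hD d1 hd1 d2 hd2 (Fin.lt_def.mpr (by omega)) with c | c
      · have hv := mem_Ioc_val.mp (c _ hb2)
        omega
      · exact (c _ hb1) (mem_Ioc_val.mpr ⟨by omega, by omega⟩)
    · obtain ⟨D, hD, rfl⟩ := Finset.mem_image.mp hX'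
      obtain ⟨B, hB, rfl⟩ := Finset.mem_image.mp hY'
      obtain ⟨d1, hd1, rfl⟩ := Finset.mem_image.mp hi
      obtain ⟨d2, hd2, rfl⟩ := Finset.mem_image.mp hp
      obtain ⟨b1, hb1, rfl⟩ := Finset.mem_image.mp hk
      obtain ⟨b2, hb2, rfl⟩ := Finset.mem_image.mp hq
      have v1 : d1.1 < b1.1 := Fin.lt_def.mp (lt_eo.mp l1)
      have v2 : b1.1 ≤ d2.1 := Fin.le_def.mp (lt_oe.mp l2)
      have v3 : d2.1 < b2.1 := Fin.lt_def.mp (lt_eo.mp l3)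
      rcases hm B hB D hD d1 hd1 d2 hd2 (Fin.lt_def.mpr (by omega)) with c | c
      · have hv := mem_Ioc_val.mp (c _ hb2)
        omega
      · exact (c _ hb1) (mem_Ioc_val.mpr ⟨by omega, by omega⟩)
    · obtain ⟨B, hB, rfl⟩ := Finset.mem_image.mp hX'
      obtain ⟨D, hD, rfl⟩ := Finset.mem_image.mp hY'
      obtain ⟨bi, hbi, rfl⟩ := Finset.mem_image.mp hi
      obtain ⟨bp, hbp, rfl⟩ := Finset.mem_image.mp hp
      obtain ⟨dk, hdk, rfl⟩ := Finset.mem_image.mp hk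
      obtain ⟨dq, hdq, rfl⟩ := Finset.mem_image.mp hq
      exact hs B hB D hD (fun he => hXY (by rw [he]))
        ⟨bi, hbi, bp, hbp, dk, hdk, dq, hdq, lt_ee.mp l1, lt_ee.mp l2, lt_ee.mp l3⟩

lemma mixed_K (γ : Finset (Finset (Fin n))) : Mixed γ (K γ) := by
  intro B hB D hD d1 hd1 d2 hd2 h12
  obtain ⟨i, -, rfl⟩ := Finset.mem_image.mp hD
  have r12 : relC γ d1 d2 := relC_trans (relC_symm (mem_cls.mp hd1)) (mem_cls.mp hd2)
  have hc := r12 B hB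
  rwa [cIoc_lt (show d1.1 < d2.1 from h12)] at hc

lemma ncle_K {γ τ : Finset (Finset (Fin n))} (hτ : τ ∈ NC n) (hmix : Mixed γ τ) :
    ncle τ (K γ) := by
  intro T hT
  obtain ⟨t, ht⟩ := hτ.1 T hT
  refine ⟨cls γ t, Finset.mem_image_of_mem _ (Finset.mem_univ t), ?_⟩
  intro s hs
  rw [mem_cls]
  rcases eq_or_ne t s with rfl | hts
  · exact relC_refl γ t
  intro B hB
  rcases lt_or_gt_of_ne (show t.1 ≠ s.1 from fun hh => hts (Fin.ext hh)) with h | h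
  · have hc := hmix B hB T hT t ht s hs (Fin.lt_def.mpr h)
    rwa [cIoc_lt h]
  · have hc := hmix B hB T hT s hs t ht (Fin.lt_def.mpr h)
    rcases hc with c | c
    · right; intro z hz hzc
      exact ((cIoc_gt h z).mp hzc) (c z hz)
    · left; intro z hz
      exact (cIoc_gt h z).mpr (c z hz)

lemma ncle_antisymm {π σ : Finset (Finset (Fin n))} (hπ : π ∈ NC n) (hσ : σ ∈ NC n)
    (h1 : ncle π σ) (h2 : ncle σ π) : π = σ := by
  have key : ∀ (α β : Finset (Finset (Fin n))), α ∈ NC n → β ∈ NC n → ncle α β → ncle β α →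
      ∀ B ∈ α, B ∈ β := by
    intro α β hα hβ hab hba B hB
    obtain ⟨D, hD, hBD⟩ := hab B hB
    obtain ⟨B', hB', hDB'⟩ := hba D hD
    obtain ⟨a, ha⟩ := hα.1 B hB
    have hBB' : B = B' := block_unique hα hB hB' ha (hDB' (hBD ha))
    have hfin : B = D := Finset.Subset.antisymm hBD (by rw [hBB']; exact hDB')
    rwa [hfin]
  apply Finset.Subset.antisymm
  · intro B hB; exact key π σ hπ hσ h1 h2 B hB
  · intro B hB; exact key σ π hσ hπ h2 h1 B hB

lemma isKreweras_K {γ : Finset (Finset (Fin n))} (hγ : γ ∈ NC n) : IsKreweras γ (K γ) := by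
  refine ⟨K_mem γ, ?_, ?_⟩
  · rw [interlace_nc_iff hγ.1 (K_mem γ).1]
    exact ⟨hγ.2.2, (K_mem γ).2.2, mixed_K γ⟩
  · intro τ hτ hnc
    have hh := (interlace_nc_iff hγ.1 hτ.1).mp hnc
    exact ncle_K hτ hh.2.2

lemma kreweras_unique {γ σ : Finset (Finset (Fin n))} (hγ : γ ∈ NC n)
    (h : IsKreweras γ σ) : σ = K γ := by
  obtain ⟨hσ, hncx, hmax⟩ := h
  have h1 : ncle σ (K γ) := ncle_K hσ ((interlace_nc_iff hγ.1 hσ.1).mp hncx).2.2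
  have h2 : ncle (K γ) σ := hmax (K γ) (K_mem γ) ((isKreweras_K hγ).2.1)
  exact ncle_antisymm hσ (K_mem γ) h1 h2


lemma dd_predC {u z : Fin n} (h : 0 < dd u z) : dd u (predC z) = dd u z - 1 := by
  have hs := succC_predC z
  by_cases hc : succC (predC z) = u
  · rw [hs] at hc; subst hc; rw [dd_self] at h; omega
  · have h2 := dd_succC hc
    rw [hs] at h2
    omega

lemma hard {γ : Finset (Finset (Fin n))} (hγ : γ ∈ NC n) (k : ℕ) :
    ∀ (u v : Fin n), dd u v ≤ k → u ≠ v →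
    (∀ a ∈ cIoc u v, ∀ b ∈ cIoc v u,
      ∃ B ∈ γ, (B ∩ cIoc a b).Nonempty ∧ (B \ cIoc a b).Nonempty) →
    ∃ B ∈ γ, succC u ∈ B ∧ succC v ∈ B := by
  induction k with
  | zero =>
    intro u v hk huv _
    exact absurd (Nat.le_zero.mp hk) (dd_pos huv).ne'
  | succ k ih =>
    intro u v hk huv H
    have hn2 : 1 < n := by
      have h1 := dd_lt u v
      have h2 := dd_pos huv
      omega
    obtain ⟨B1, hB1, hyB1⟩ := exists_block hγ (succC v)
    by_cases hmeets : ∃ a' ∈ B1, a' ∈ cIoc u v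
    · obtain ⟨a', ha'B, ha'max⟩ := Finset.exists_max_image (B1 ∩ cIoc u v) (fun z => dd u z) (by
        obtain ⟨a, h1, h2⟩ := hmeets; exact ⟨a, Finset.mem_inter.mpr ⟨h1, h2⟩⟩)
      have ha'B1 : a' ∈ B1 := (Finset.mem_inter.mp ha'B).1
      have ha'arc : a' ∈ cIoc u v := (Finset.mem_inter.mp ha'B).2
      rcases eq_or_ne a' (succC u) with heq | hax
      · exact ⟨B1, hB1, heq ▸ ha'B1, hyB1⟩
      · have hdx : dd u (succC u) = 1 := dd_succC_self u hn2
        have harc := mem_cIoc.mp ha'arc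
        have ha2 : 2 ≤ dd u a' := by
          rcases Nat.lt_or_ge (dd u a') 2 with h | h
          · exfalso
            have h1 : dd u a' = 1 := by omega
            exact hax (dd_inj (by rw [h1, hdx]))
          · exact h
        have hdv2 : dd u (predC a') = dd u a' - 1 := dd_predC (by omega)
        have hsa : succC (predC a') = a' := succC_predC a'
        have hv2u : predC a' ≠ u := by
          intro hh
          have hz : dd u (predC a') = 0 := by rw [hh, dd_self]
          omega
        have hklt : dd u (predC a') ≤ k := by
          have h2 := harc.2
          omega
        have H2 : ∀ a ∈ cIoc u (predC a'), ∀ b ∈ cIoc (predC a') u,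
            ∃ B ∈ γ, (B ∩ cIoc a b).Nonempty ∧ (B \ cIoc a b).Nonempty := by
          intro a ha b hb
          have haa := mem_cIoc.mp ha
          have hbb : b ∉ cIoc u (predC a') := (cIoc_compl (Ne.symm hv2u)).mp hb
          rw [mem_cIoc] at hbb; push_neg at hbb
          by_cases hbv : b ∈ cIoc v u
          · exact H a (mem_cIoc.mpr ⟨haa.1, by have := harc.2; omega⟩) b hbv
          · have hbin : b ∈ cIoc u v := by
              by_contra hc
              exact hbv ((cIoc_compl huv).mpr hc)
            have hb2 := mem_cIoc.mp hbin
            refine ⟨B1, hB1, ⟨a', Finset.mem_inter.mpr ⟨ha'B1, ?_⟩⟩,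
              ⟨succC v, Finset.mem_sdiff.mpr ⟨hyB1, ?_⟩⟩⟩
            · rw [mem_cIoc]
              have e1 : dd a a' = dd u a' - dd u a := dd_sub (by omega)
              have e2 : dd a b = dd u b - dd u a := dd_sub (by omega)
              omega
            · rw [mem_cIoc]; push_neg
              intro hy0
              have e2 : dd a b = dd u b - dd u a := dd_sub (by omega)
              have hnn := dd_lt u v
              by_cases hyu : succC v = u
              · rw [hyu]
                have e3 : dd a u = dd u u + n - dd u a :=
                  dd_sub' (by rw [dd_self]; omega)
                rw [dd_self] at e3
                omega
              · have e4 : dd u (succC v) = dd u v + 1 := dd_succC hyu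
                have e5 : dd a (succC v) = dd u (succC v) - dd u a := dd_sub (by omega)
                omega
        obtain ⟨B, hB, hxB, hv2B⟩ := ih u (predC a') hklt (Ne.symm hv2u) H2
        rw [hsa] at hv2B
        have hBB1 : B = B1 := block_unique hγ hB hB1 hv2B ha'B1
        exact ⟨B1, hB1, by rw [← hBB1]; exact hxB, hyB1⟩
    · exfalso
      push_neg at hmeets
      have hB1sub : ∀ z ∈ B1, z ∈ cIoc v u := fun z hz => (cIoc_compl huv).mpr (hmeets z hz)
      obtain ⟨q, hqB, hqmax⟩ := Finset.exists_max_image B1 (fun z => dd v z) ⟨succC v, hyB1⟩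
      have hqarc : q ∈ cIoc v u := hB1sub q hqB
      have hv_arc : v ∈ cIoc u v := mem_cIoc.mpr ⟨dd_pos huv, le_refl _⟩
      obtain ⟨D, hD, ⟨d1, hd1⟩, ⟨d2, hd2⟩⟩ := H v hv_arc q hqarc
      rw [Finset.mem_inter] at hd1
      rw [Finset.mem_sdiff] at hd2
      obtain ⟨hd1D, hd1arc⟩ := hd1
      obtain ⟨hd2D, hd2arc⟩ := hd2
      by_cases hDB1 : D = B1
      · subst hDB1
        have h1 := hqmax d2 hd2D
        have h2 := mem_cIoc.mp (hB1sub d2 hd2D)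
        exact hd2arc (mem_cIoc.mpr ⟨h2.1, h1⟩)
      · have hdvy : dd v (succC v) = 1 := dd_succC_self v hn2
        have hm1 := mem_cIoc.mp hd1arc
        have hd1y : d1 ≠ succC v := fun hh => hDB1 (block_unique hγ hD hB1 (hh ▸ hd1D) hyB1)
        have hd1q : d1 ≠ q := fun hh => hDB1 (block_unique hγ hD hB1 (hh ▸ hd1D) hqB)
        have hv1 : 1 < dd v d1 := by
          rcases Nat.lt_or_ge 1 (dd v d1) with h | h
          · exact h
          · exfalso
            have h1 : dd v d1 = 1 := by omega
            exact hd1y (dd_inj (by rw [h1, hdvy]))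
        have hv2' : dd v d1 < dd v q := by
          have h1 : dd v d1 ≠ dd v q := fun hh => hd1q (dd_inj hh)
          have h2 := hm1.2
          omega
        rw [mem_cIoc] at hd2arc; push_neg at hd2arc
        rcases Nat.eq_zero_or_pos (dd v d2) with hz | hz
        · exact cross_of_circ hγ.2.2 hD hB1 hDB1 (w := v) hd2D hyB1 hd1D hqB
            (by omega) (by omega) (by omega)
        · have hgt := hd2arc hz
          exact cross_of_circ hγ.2.2 hB1 hD (fun hh => hDB1 hh.symm) (w := v) hyB1 hd1D hqB hd2D
            (by omega) (by omega) (by omega)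


lemma dd_rel (u a X : Fin n) : (dd u a ≤ dd u X ∧ dd a X = dd u X - dd u a) ∨
    (dd u X < dd u a ∧ dd a X = dd u X + n - dd u a) := by
  rcases le_or_gt (dd u a) (dd u X) with h | h
  · exact Or.inl ⟨h, dd_sub h⟩
  · exact Or.inr ⟨h, dd_sub' h⟩

lemma easy {u v : Fin n} (huv : u ≠ v)
    {B0 : Finset (Fin n)} (hx : succC u ∈ B0) (hy : succC v ∈ B0) :
    ∀ a ∈ cIoc u v, ∀ b ∈ cIoc v u,
      (B0 ∩ cIoc a b).Nonempty ∧ (B0 \ cIoc a b).Nonempty := by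
  intro a ha b hb
  have hn2 : 1 < n := by
    have h1 := dd_lt u v
    have h2 := dd_pos huv
    omega
  have hDn := dd_lt u v
  have ha' := mem_cIoc.mp ha
  have hb'' := mem_cIoc.mp hb
  have hb' : b ∉ cIoc u v := (cIoc_compl huv).mp hb
  rw [mem_cIoc] at hb'; push_neg at hb'
  rcases eq_or_ne (succC v) u with hyu | hyu
  · have h1 : dd v u = 1 := by rw [← hyu]; exact dd_succC_self v hn2
    have hb3 : b = u := dd_inj (show dd v b = dd v u by omega)
    have hb4 : succC v = b := by rw [hyu, hb3]
    have hau : a ≠ b := by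
      intro hh
      have hz := ha'.1
      rw [hh, hb3, dd_self] at hz
      omega
    constructor
    · exact ⟨b, Finset.mem_inter.mpr ⟨hb4 ▸ hy,
        mem_cIoc.mpr ⟨dd_pos hau, le_refl _⟩⟩⟩
    · refine ⟨succC u, Finset.mem_sdiff.mpr ⟨hx, ?_⟩⟩
      rw [mem_cIoc]; push_neg
      intro h0
      have E3 := dd_rel u a (succC u)
      have EU := dd_rel u a b
      have hxu : dd u (succC u) = 1 := dd_succC_self u hn2
      have h00 : dd u b = 0 := by rw [hb3]; exact dd_self u
      have hL1 := dd_lt u a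
      omega
  · have hy1 : dd u (succC v) = dd u v + 1 := dd_succC hyu
    have hl1 := dd_lt u b
    have hl3 := dd_lt u a
    constructor
    · refine ⟨succC v, Finset.mem_inter.mpr ⟨hy, ?_⟩⟩
      rw [mem_cIoc]
      have E1 := dd_rel u a b
      have E2 := dd_rel u a (succC v)
      omega
    · refine ⟨succC u, Finset.mem_sdiff.mpr ⟨hx, ?_⟩⟩
      rw [mem_cIoc]; push_neg
      intro h0
      have E1 := dd_rel u a b
      have E3 := dd_rel u a (succC u)
      have hxu : dd u (succC u) = 1 := dd_succC_self u hn2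
      omega

def Hc (γ : Finset (Finset (Fin n))) (u v : Fin n) : Prop :=
  ∀ a ∈ cIoc u v, ∀ b ∈ cIoc v u,
    ∃ B ∈ γ, (B ∩ cIoc a b).Nonempty ∧ (B \ cIoc a b).Nonempty

lemma P_iff_H {γ : Finset (Finset (Fin n))} (hγ : γ ∈ NC n) {u v : Fin n} (huv : u ≠ v) :
    (∃ B ∈ γ, succC u ∈ B ∧ succC v ∈ B) ↔ Hc γ u v := by
  constructor
  · rintro ⟨B0, hB0, hx, hy⟩ a ha b hb
    exact ⟨B0, hB0, easy huv hx hy a ha b hb⟩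
  · exact hard hγ (dd u v) u v (le_refl _) huv

lemma strad_iff (γ : Finset (Finset (Fin n))) (a b : Fin n) :
    (∃ B ∈ γ, (B ∩ cIoc a b).Nonempty ∧ (B \ cIoc a b).Nonempty) ↔ ¬ relC γ a b := by
  unfold relC
  push_neg
  constructor
  · rintro ⟨B, hB, ⟨z1, hz1⟩, ⟨z2, hz2⟩⟩
    rw [Finset.mem_inter] at hz1
    rw [Finset.mem_sdiff] at hz2
    exact ⟨B, hB, ⟨z2, hz2.1, hz2.2⟩, ⟨z1, hz1.1, hz1.2⟩⟩
  · rintro ⟨B, hB, ⟨z2, hz2, hz2n⟩, ⟨z1, hz1, hz1m⟩⟩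
    exact ⟨B, hB, ⟨z1, Finset.mem_inter.mpr ⟨hz1, hz1m⟩⟩,
      ⟨z2, Finset.mem_sdiff.mpr ⟨hz2, hz2n⟩⟩⟩

lemma relC_iff_K (γ : Finset (Finset (Fin n))) (a b : Fin n) :
    relC γ a b ↔ ∃ D ∈ K γ, a ∈ D ∧ b ∈ D := by
  constructor
  · intro h
    exact ⟨cls γ a, Finset.mem_image_of_mem _ (Finset.mem_univ a),
      mem_cls.mpr (relC_refl γ a), mem_cls.mpr h⟩
  · rintro ⟨D, hD, haD, hbD⟩
    obtain ⟨i, -, rfl⟩ := Finset.mem_image.mp hD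
    exact relC_trans (relC_symm (mem_cls.mp haD)) (mem_cls.mp hbD)

lemma K_inj {γ1 γ2 : Finset (Finset (Fin n))} (h1 : γ1 ∈ NC n) (h2 : γ2 ∈ NC n)
    (hK : K γ1 = K γ2) : γ1 = γ2 := by
  have hHc : ∀ (γ : Finset (Finset (Fin n))) (u v : Fin n), Hc γ u v ↔
      (∀ a ∈ cIoc u v, ∀ b ∈ cIoc v u, ¬ ∃ D ∈ K γ, a ∈ D ∧ b ∈ D) := by
    intro γ u v
    unfold Hc
    apply forall₂_congr; intro a _; apply forall₂_congr; intro b _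
    rw [strad_iff, relC_iff_K]
  have same : ∀ s t : Fin n, (∃ B ∈ γ1, s ∈ B ∧ t ∈ B) ↔ (∃ B ∈ γ2, s ∈ B ∧ t ∈ B) := by
    intro s t
    rcases eq_or_ne s t with rfl | hst
    · constructor
      · intro _; obtain ⟨B, hB, hs⟩ := exists_block h2 s; exact ⟨B, hB, hs, hs⟩
      · intro _; obtain ⟨B, hB, hs⟩ := exists_block h1 s; exact ⟨B, hB, hs, hs⟩
    · have hst' : predC s ≠ predC t :=
        fun hh => hst (by rw [← succC_predC s, hh, succC_predC])
      rw [← succC_predC s, ← succC_predC t]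
      rw [P_iff_H h1 hst', P_iff_H h2 hst', hHc γ1, hHc γ2, hK]
  have key : ∀ (α β : Finset (Finset (Fin n))), α ∈ NC n → β ∈ NC n →
      (∀ s t, (∃ B ∈ α, s ∈ B ∧ t ∈ B) ↔ (∃ B ∈ β, s ∈ B ∧ t ∈ B)) → α ⊆ β := by
    intro α β hα hβ hrel B hB
    obtain ⟨b0, hb0⟩ := hα.1 B hB
    obtain ⟨D, hD, hb0D⟩ := exists_block hβ b0
    have hBD : B = D := by
      apply Finset.Subset.antisymm
      · intro z hz
        obtain ⟨D', hD', hb0', hz'⟩ := (hrel b0 z).mp ⟨B, hB, hb0, hz⟩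
        rwa [block_unique hβ hD' hD hb0' hb0D] at hz'
      · intro z hz
        obtain ⟨B', hB', hb0', hz'⟩ := (hrel b0 z).mpr ⟨D, hD, hb0D, hz⟩
        rwa [block_unique hα hB' hB hb0' hb0] at hz'
    exact hBD ▸ hD
  exact Finset.Subset.antisymm (key γ1 γ2 h1 h2 same)
    (key γ2 γ1 h2 h1 (fun s t => (same s t).symm))

end KrAux

/-- the Kreweras complement map is a bijection of `NC(n)` onto itself, and
it is order-reversing for the reversed refinement order. -/
theorem stmt2 (n : ℕ) (Kr : Finset (Finset (Fin n)) → Finset (Finset (Fin n)))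
    (hKr : ∀ γ ∈ NC n, IsKreweras γ (Kr γ)) :
    Set.BijOn Kr (NC n) (NC n) ∧
      ∀ π ∈ NC n, ∀ σ ∈ NC n, ncle π σ → ncle (Kr σ) (Kr π) := by
  constructor
  · have hmaps : Set.MapsTo Kr (NC n) (NC n) := fun γ hγ => (hKr γ hγ).1
    have hinj : Set.InjOn Kr (NC n) := by
      intro γ1 h1 γ2 h2 heq
      have e1 : Kr γ1 = KrAux.K γ1 := KrAux.kreweras_unique h1 (hKr γ1 h1)
      have e2 : Kr γ2 = KrAux.K γ2 := KrAux.kreweras_unique h2 (hKr γ2 h2)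
      exact KrAux.K_inj h1 h2 (by rw [← e1, ← e2, heq])
    exact ((Set.toFinite (NC n)).injOn_iff_bijOn_of_mapsTo hmaps).mp hinj
  · intro π hπ σ hσ hle
    have hKσ := hKr σ hσ
    have hKπ := hKr π hπ
    have hnc : IsNonCrossing (interlace π (Kr σ)) := by
      rw [KrAux.interlace_nc_iff hπ.1 hKσ.1.1]
      have hh := (KrAux.interlace_nc_iff hσ.1 hKσ.1.1).mp hKσ.2.1
      refine ⟨hπ.2.2, hh.2.1, ?_⟩
      intro B hB D hD d1 hd1 d2 hd2 h12
      obtain ⟨B', hB', hBB'⟩ := hle B hB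
      rcases hh.2.2 B' hB' D hD d1 hd1 d2 hd2 h12 with c | c
      · left; exact fun z hz => c z (hBB' hz)
      · right; exact fun z hz => c z (hBB' hz)
    exact hKπ.2.2 (Kr σ) hKσ.1 hnc
end

section
/- For any σ ∈ NC_S(2n) (a non-crossing partition of {1,…,2n} all of whose blocks consist of elements of the same parity), σ belongs to NC_0(2n) (i.e., the restriction of σ to the even elements equals the Kreweras complement of the restriction to the odd elements) if and only if the join σ ∨ 0̂_n of σ with the doubled partition 0̂_n = {(1,2),(3,4),…,(2n−1,2n)} in the lattice NC(2n) is the one-block partition 1_{2n}. -/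
open Finset

/-- Every block of `σ` consists of elements of the same parity. -/
def SameParity {n : ℕ} (σ : Finset (Finset (Fin (2 * n)))) : Prop :=
  ∀ B ∈ σ, ∀ a ∈ B, ∀ b ∈ B, a.1 % 2 = b.1 % 2

/-- Restriction of `σ ∈ NC(2n)` to the odd elements (positions `2i`), as a partition of `Fin n`. -/
def restrictOdd (n : ℕ) (σ : Finset (Finset (Fin (2 * n)))) : Finset (Finset (Fin n)) :=
  (σ.image (fun B => Finset.univ.filter (fun i => oddE n i ∈ B))).filter (fun C => C.Nonempty)

/-- Restriction of `σ ∈ NC(2n)` to the even elements (positions `2i+1`), as a partition of `Fin n`. -/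
def restrictEven (n : ℕ) (σ : Finset (Finset (Fin (2 * n)))) : Finset (Finset (Fin n)) :=
  (σ.image (fun B => Finset.univ.filter (fun i => evenE n i ∈ B))).filter (fun C => C.Nonempty)

/-- The doubled partition `π̂`: each block `(i₁,…,iₛ)` becomes `(2i₁−1,2i₁,…,2iₛ−1,2iₛ)`. -/
def doubleP (n : ℕ) (π : Finset (Finset (Fin n))) : Finset (Finset (Fin (2 * n))) :=
  π.image (fun B => B.image (oddE n) ∪ B.image (evenE n))

/-- `0̂ₙ`, the doubling of the singleton partition: blocks `{2i−1, 2i}`. -/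
def zeroHat (n : ℕ) : Finset (Finset (Fin (2 * n))) :=
  Finset.univ.image (fun i : Fin n => ({oddE n i, evenE n i} : Finset (Fin (2 * n))))

/-- `J` is the join of `P` and `Q` in the lattice `NC(m)`. -/
def IsJoin (m : ℕ) (P Q J : Finset (Finset (Fin m))) : Prop :=
  J ∈ NC m ∧ ncle P J ∧ ncle Q J ∧ ∀ τ ∈ NC m, ncle P τ → ncle Q τ → ncle J τ


/-!
Write `γ` and `δ` for the restrictions of `σ` to the unbarred points `1, …, n` and the barred
points `1̄, …, n̄` of `1 < 1̄ < 2 < 2̄ < ⋯`, so that `σ = γ ∪ δ`.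

If `σ ∨ 0̂ₙ = 1`, the graph whose vertices are the blocks of `σ` and `0̂ₙ`, and whose edges are
the `2n` points, is connected, so `#γ + #δ = #σ ≤ n + 1` by Euler's inequality. If `γ ∪ τ` is
non-crossing, each block of `τ` lies in a class of the relation "no block of `γ` has points both
inside and outside `(x, y]`". These classes form the Kreweras complement of `γ`. There are at least
`n + 1 - #γ ≥ #δ` class minima, all of them minima of blocks of `δ`, so the classes are exactly the
blocks of `δ`, and `τ ≤ δ`.

Conversely, a non-crossing `ρ ≥ σ, 0̂ₙ` other than `1` has an interval block `(ū, t̄]`, and every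
block of `σ` lies inside or outside it. Merging the blocks of `ū` and `t̄` keeps `σ` non-crossing.
This gives a partition of the barred points strictly coarser than `δ` and still compatible with
`γ`, which contradicts the maximality of `δ`.
-/

section Partitions

variable {α : Type*}

def IsPartition (P : Finset (Finset α)) : Prop :=
  (∀ B ∈ P, B.Nonempty) ∧ ∀ a : α, ∃! B, B ∈ P ∧ a ∈ B

def SameBlock (P : Finset (Finset α)) (a b : α) : Prop :=
  ∃ B ∈ P, a ∈ B ∧ b ∈ B

lemma SameBlock.symm {P : Finset (Finset α)} {a b : α} (h : SameBlock P a b) : SameBlock P b a :=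
  let ⟨B, hB, ha, hb⟩ := h
  ⟨B, hB, hb, ha⟩

lemma mem_NC_iff {m : ℕ} {P : Finset (Finset (Fin m))} :
    P ∈ NC m ↔ IsPartition P ∧ IsNonCrossing P :=
  and_assoc.symm

lemma IsPartition.eq_of_mem {P : Finset (Finset α)} (hP : IsPartition P) {B D : Finset α}
    {a : α} (hB : B ∈ P) (hD : D ∈ P) (haB : a ∈ B) (haD : a ∈ D) : B = D :=
  (hP.2 a).unique ⟨hB, haB⟩ ⟨hD, haD⟩

lemma IsPartition.sameBlock_iff {P : Finset (Finset α)} (hP : IsPartition P) {B : Finset α}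
    {a b : α} (hB : B ∈ P) (ha : a ∈ B) : SameBlock P a b ↔ b ∈ B := by
  refine ⟨?_, fun hb => ⟨B, hB, ha, hb⟩⟩
  rintro ⟨D, hD, haD, hbD⟩
  rwa [hP.eq_of_mem hB hD ha haD]

lemma ncle.sameBlock {m : ℕ} {P Q : Finset (Finset (Fin m))} (h : ncle P Q) {a b : Fin m}
    (hab : SameBlock P a b) : SameBlock Q a b := by
  obtain ⟨B, hB, ha, hb⟩ := hab
  obtain ⟨D, hD, hBD⟩ := h B hB
  exact ⟨D, hD, hBD ha, hBD hb⟩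

lemma ncle.subset_or_disjoint {m : ℕ} {P Q : Finset (Finset (Fin m))} (h : ncle P Q)
    (hQ : IsPartition Q) {B D : Finset (Fin m)} (hB : B ∈ P) (hD : D ∈ Q) :
    B ⊆ D ∨ Disjoint B D := by
  obtain ⟨E, hE, hBE⟩ := h B hB
  by_cases hED : E = D
  · exact Or.inl (hED ▸ hBE)
  · exact Or.inr (disjoint_left.2 fun x hxB hxD => hED (hQ.eq_of_mem hE hD (hBE hxB) hxD))

lemma IsPartition.exists_notMem {P : Finset (Finset α)} (hP : IsPartition P)
    (h : ¬ ∃ D ∈ P, ∀ a, a ∈ D) (x : α) : ∃ D ∈ P, x ∉ D := by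
  obtain ⟨B, ⟨hB, hxB⟩, -⟩ := hP.2 x
  obtain ⟨w, hw⟩ : ∃ w, w ∉ B := by simpa using fun h' => h ⟨B, hB, h'⟩
  obtain ⟨D, ⟨hD, hwD⟩, -⟩ := hP.2 w
  exact ⟨D, hD, fun hxD => hw (hP.eq_of_mem hD hB hxD hxB ▸ hwD)⟩

variable [DecidableEq α]

def mergeBlocks (P : Finset (Finset α)) (C₁ C₂ : Finset α) : Finset (Finset α) :=
  insert (C₁ ∪ C₂) ((P.erase C₁).erase C₂)

lemma mem_mergeBlocks {P : Finset (Finset α)} {C₁ C₂ D : Finset α} :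
    D ∈ mergeBlocks P C₁ C₂ ↔ D = C₁ ∪ C₂ ∨ (D ∈ P ∧ D ≠ C₁ ∧ D ≠ C₂) := by
  simp only [mergeBlocks, mem_insert, mem_erase]
  tauto

lemma IsPartition.mergeBlocks {P : Finset (Finset α)} (hP : IsPartition P) {C₁ C₂ : Finset α}
    (h₁ : C₁ ∈ P) (h₂ : C₂ ∈ P) : IsPartition (mergeBlocks P C₁ C₂) := by
  refine ⟨fun D hD => ?_, fun a => ?_⟩
  · rcases mem_mergeBlocks.1 hD with rfl | ⟨hD, -⟩
    · exact (hP.1 C₁ h₁).mono subset_union_left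
    · exact hP.1 D hD
  obtain ⟨B, ⟨hB, haB⟩, -⟩ := hP.2 a
  have hblock : ∀ D ∈ P, a ∈ D → D = B := fun D hD haD => hP.eq_of_mem hD hB haD haB
  by_cases ha : a ∈ C₁ ∪ C₂
  · refine ⟨C₁ ∪ C₂, ⟨mem_mergeBlocks.2 (Or.inl rfl), ha⟩, ?_⟩
    rintro D ⟨hD, haD⟩
    rcases mem_mergeBlocks.1 hD with rfl | ⟨hD, hD₁, hD₂⟩
    · rfl
    rcases mem_union.1 ha with ha | ha
    · exact absurd (hblock D hD haD ▸ (hblock C₁ h₁ ha).symm) hD₁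
    · exact absurd (hblock D hD haD ▸ (hblock C₂ h₂ ha).symm) hD₂
  · have hB₁ : B ≠ C₁ := fun h => ha (mem_union_left _ (h ▸ haB))
    have hB₂ : B ≠ C₂ := fun h => ha (mem_union_right _ (h ▸ haB))
    refine ⟨B, ⟨mem_mergeBlocks.2 (Or.inr ⟨hB, hB₁, hB₂⟩), haB⟩, ?_⟩
    rintro D ⟨hD, haD⟩
    rcases mem_mergeBlocks.1 hD with rfl | ⟨hD, -⟩
    · exact absurd haD ha
    · exact hblock D hD haD

end Partitions

section Crossings

variable {α : Type*} [LinearOrder α]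

def NoCrossing (X Y : Finset α) : Prop :=
  ¬ Crossing X Y ∧ ¬ Crossing Y X

lemma NoCrossing.symm {X Y : Finset α} (h : NoCrossing X Y) : NoCrossing Y X :=
  ⟨h.2, h.1⟩

lemma IsNonCrossing.noCrossing {P : Finset (Finset α)} (hP : IsNonCrossing P) {B D : Finset α}
    (hB : B ∈ P) (hD : D ∈ P) (hBD : B ≠ D) : NoCrossing B D :=
  ⟨hP B hB D hD hBD, hP D hD B hB hBD.symm⟩

lemma noCrossing_of_not_between {X Y : Finset α}
    (h : ∀ a ∈ X, ∀ b ∈ X, ∀ z ∈ Y, ¬ (a < z ∧ z < b)) : NoCrossing X Y :=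
  ⟨fun ⟨i, hi, p, hp, k, hk, _, _, h₁, h₂, _⟩ => h i hi p hp k hk ⟨h₁, h₂⟩,
    fun ⟨_, _, p, hp, k, hk, q, hq, _, h₂, h₃⟩ => h k hk q hq p hp ⟨h₂, h₃⟩⟩

lemma noCrossing_singleton (x : α) (Y : Finset α) : NoCrossing {x} Y :=
  noCrossing_of_not_between fun a ha b hb _ _ h => by
    rw [mem_singleton] at ha hb
    subst ha hb
    exact lt_asymm h.1 h.2

variable [DecidableEq α]

lemma NoCrossing.union {A B T : Finset α} (hA : NoCrossing A T) (hB : NoCrossing B T) {x : α}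
    (hxA : x ∈ A) (hxB : x ∈ B) (hxT : x ∉ T) : NoCrossing (A ∪ B) T := by
  -- a crossing of `A ∪ B` with `T` that alternates between `A` and `B` is moved onto `x`
  have left : ∀ {A B : Finset α}, NoCrossing A T → NoCrossing B T → x ∈ A → x ∈ B →
      ∀ i ∈ A, ∀ p ∈ B, ∀ k ∈ T, ∀ q ∈ T, i < k → k < p → p < q → False := by
    intro A B hA hB hxA hxB i hi p hp k hk q hq h₁ h₂ h₃
    rcases lt_or_gt_of_ne (show x ≠ k by rintro rfl; exact hxT hk) with hxk | hxk
    · exact hB.1 ⟨x, hxB, p, hp, k, hk, q, hq, hxk, h₂, h₃⟩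
    rcases lt_or_gt_of_ne (show x ≠ q by rintro rfl; exact hxT hq) with hxq | hxq
    · exact hA.1 ⟨i, hi, x, hxA, k, hk, q, hq, h₁, hxk, hxq⟩
    · exact hB.2 ⟨k, hk, q, hq, p, hp, x, hxB, h₂, h₃, hxq⟩
  have right : ∀ {A B : Finset α}, NoCrossing A T → NoCrossing B T → x ∈ A → x ∈ B →
      ∀ i ∈ T, ∀ p ∈ T, ∀ k ∈ A, ∀ q ∈ B, i < k → k < p → p < q → False := by
    intro A B hA hB hxA hxB i hi p hp k hk q hq h₁ h₂ h₃
    rcases lt_or_gt_of_ne (show x ≠ i by rintro rfl; exact hxT hi) with hxi | hxi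
    · exact hA.1 ⟨x, hxA, k, hk, i, hi, p, hp, hxi, h₁, h₂⟩
    rcases lt_or_gt_of_ne (show x ≠ p by rintro rfl; exact hxT hp) with hxp | hxp
    · exact hB.2 ⟨i, hi, p, hp, x, hxB, q, hq, hxi, hxp, h₃⟩
    · exact hA.2 ⟨i, hi, p, hp, k, hk, x, hxA, h₁, h₂, hxp⟩
  constructor
  · rintro ⟨i, hi, p, hp, k, hk, q, hq, h₁, h₂, h₃⟩
    rcases mem_union.1 hi with hi | hi <;> rcases mem_union.1 hp with hp | hp
    · exact hA.1 ⟨i, hi, p, hp, k, hk, q, hq, h₁, h₂, h₃⟩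
    · exact left hA hB hxA hxB i hi p hp k hk q hq h₁ h₂ h₃
    · exact left hB hA hxB hxA i hi p hp k hk q hq h₁ h₂ h₃
    · exact hB.1 ⟨i, hi, p, hp, k, hk, q, hq, h₁, h₂, h₃⟩
  · rintro ⟨i, hi, p, hp, k, hk, q, hq, h₁, h₂, h₃⟩
    rcases mem_union.1 hk with hk | hk <;> rcases mem_union.1 hq with hq | hq
    · exact hA.2 ⟨i, hi, p, hp, k, hk, q, hq, h₁, h₂, h₃⟩
    · exact right hA hB hxA hxB i hi p hp k hk q hq h₁ h₂ h₃
    · exact right hB hA hxB hxA i hi p hp k hk q hq h₁ h₂ h₃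
    · exact hB.2 ⟨i, hi, p, hp, k, hk, q, hq, h₁, h₂, h₃⟩

end Crossings

section Components

open Relation

variable {α : Type*} [Fintype α] [DecidableEq α]

open Classical in
noncomputable def components (r : α → α → Prop) : Finset (Finset α) :=
  univ.image fun a => univ.filter (EqvGen r a)

lemma mem_components {r : α → α → Prop} {K : Finset α} :
    K ∈ components r ↔ ∃ a, ∀ b, b ∈ K ↔ EqvGen r a b := by
  classical
  simp only [components, mem_image, mem_univ, true_and]
  refine ⟨fun ⟨a, ha⟩ => ⟨a, fun b => by rw [← ha]; simp⟩, fun ⟨a, ha⟩ => ⟨a, ?_⟩⟩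
  ext b
  simp [ha]

lemma mem_components_iff {r : α → α → Prop} {K : Finset α} (hK : K ∈ components r) {a b : α}
    (ha : a ∈ K) : b ∈ K ↔ EqvGen r a b := by
  obtain ⟨c, hc⟩ := mem_components.1 hK
  have hca := (hc a).1 ha
  rw [hc b]
  exact ⟨fun hcb => (hca.symm _ _).trans _ _ _ hcb, fun hab => hca.trans _ _ _ hab⟩

lemma isPartition_components (r : α → α → Prop) : IsPartition (components r) := by
  refine ⟨fun K hK => ?_, fun a => ?_⟩
  · obtain ⟨a, ha⟩ := mem_components.1 hK
    exact ⟨a, (ha a).2 (EqvGen.refl a)⟩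
  · classical
    refine ⟨univ.filter (EqvGen r a), ⟨mem_components.2 ⟨a, by simp⟩, by simp [EqvGen.refl]⟩, ?_⟩
    rintro K ⟨hK, haK⟩
    ext b
    simp [mem_components_iff hK haK]

lemma ncle_components {m : ℕ} {F : Finset (Finset (Fin m))} {B : Finset (Fin m)} (hB : B ∈ F)
    (hne : B.Nonempty) : ∃ K ∈ components (SameBlock F), B ⊆ K := by
  classical
  obtain ⟨b, hb⟩ := hne
  exact ⟨univ.filter (EqvGen (SameBlock F) b), mem_components.2 ⟨b, by simp⟩,
    fun x hx => by simpa using EqvGen.rel _ _ ⟨B, hB, hb, hx⟩⟩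

end Components

section ComponentsNonCrossing

open Relation

variable {α : Type*} [LinearOrder α] [DecidableEq α] {F : Finset (Finset α)}

/-- `W` is the union of the blocks along a chain from `u` to `v`. -/
lemma exists_union_noCrossing {a u v : α} (huv : EqvGen (SameBlock F) u v)
    (hau : EqvGen (SameBlock F) a u) :
    ∃ W : Finset α, u ∈ W ∧ v ∈ W ∧ (∀ x ∈ W, EqvGen (SameBlock F) a x) ∧
      ∀ T : Finset α, (∀ D ∈ F, (∃ x ∈ D, EqvGen (SameBlock F) a x) → NoCrossing D T) →
        (∀ t ∈ T, ¬ EqvGen (SameBlock F) a t) → NoCrossing W T := by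
  induction huv with
  | rel u v huv =>
      obtain ⟨B, hB, hu, hv⟩ := huv
      exact ⟨B, hu, hv, fun x hx => hau.trans _ _ _ (EqvGen.rel _ _ ⟨B, hB, hu, hx⟩),
        fun T hT _ => hT B hB ⟨u, hu, hau⟩⟩
  | refl u =>
      exact ⟨{u}, mem_singleton_self u, mem_singleton_self u,
        fun x hx => by rwa [mem_singleton.1 hx], fun T _ _ => noCrossing_singleton u T⟩
  | symm u v hvu ih =>
      obtain ⟨W, hv, hu, hW, hWT⟩ := ih (hau.trans _ _ _ (hvu.symm _ _))
      exact ⟨W, hu, hv, hW, hWT⟩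
  | trans u v w _ _ ih₁ ih₂ =>
      obtain ⟨W₁, hu₁, hv₁, hW₁, hW₁T⟩ := ih₁ hau
      obtain ⟨W₂, hv₂, hw₂, hW₂, hW₂T⟩ := ih₂ (hW₁ v hv₁)
      refine ⟨W₁ ∪ W₂, mem_union_left _ hu₁, mem_union_right _ hw₂, fun x hx => ?_,
        fun T hT hTa => (hW₁T T hT hTa).union (hW₂T T hT hTa) hv₁ hv₂ fun hvT => ?_⟩
      · rcases mem_union.1 hx with hx | hx
        exacts [hW₁ x hx, hW₂ x hx]
      · exact hTa v hvT (hW₁ v hv₁)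

lemma isNonCrossing_components [Fintype α] (hF : IsNonCrossing F) :
    IsNonCrossing (components (SameBlock F)) := by
  intro K hK L hL hKL ⟨i, hi, p, hp, k, hk, q, hq, h₁, h₂, h₃⟩
  have hK' : ∀ x, x ∈ K ↔ EqvGen (SameBlock F) i x := fun x => mem_components_iff hK hi
  have hL' : ∀ x, x ∈ L ↔ EqvGen (SameBlock F) k x := fun x => mem_components_iff hL hk
  have hik : ¬ EqvGen (SameBlock F) i k := fun h =>
    hKL (by ext x; rw [hK', hL']; exact ⟨fun hx => (h.symm _ _).trans _ _ _ hx,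
      fun hx => h.trans _ _ _ hx⟩)
  have hsame : ∀ {D : Finset α} {x y : α}, D ∈ F → x ∈ D → y ∈ D →
      EqvGen (SameBlock F) x y := fun hD hx hy => EqvGen.rel _ _ ⟨_, hD, hx, hy⟩
  obtain ⟨W₁, hiW, hpW, hW₁, hW₁T⟩ := exists_union_noCrossing ((hK' p).1 hp) (EqvGen.refl i)
  obtain ⟨W₂, hkW, hqW, -, hW₂T⟩ := exists_union_noCrossing ((hL' q).1 hq) (EqvGen.refl k)
  -- the blocks of the class of `k` do not cross `W₁`, hence neither does `W₂`
  have hW₁D : ∀ D ∈ F, (∃ x ∈ D, EqvGen (SameBlock F) k x) → NoCrossing D W₁ := by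
    rintro D hD ⟨x, hxD, hkx⟩
    refine (hW₁T D (fun D' hD' ⟨y, hyD', hiy⟩ => hF.noCrossing hD' hD ?_) fun t ht hit => ?_).symm
    · intro h
      exact hik (hiy.trans _ _ _ ((hsame hD' hyD' (h ▸ hxD)).trans _ _ _ (hkx.symm _ _)))
    · exact hik (hit.trans _ _ _ ((hsame hD ht hxD).trans _ _ _ (hkx.symm _ _)))
  have := hW₂T W₁ hW₁D fun t ht hkt => hik ((hW₁ t ht).trans _ _ _ (hkt.symm _ _))
  exact this.2 ⟨i, hiW, p, hpW, k, hkW, q, hqW, h₁, h₂, h₃⟩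

end ComponentsNonCrossing

section Euler

open Relation

variable {α : Type*} [Fintype α] [DecidableEq α]

/-- Euler's inequality for the connected graph whose vertices are the blocks of `P` and `Q` and
whose edges are the points, each joining the two blocks that contain it. -/
lemma IsPartition.card_add_card_le {P Q : Finset (Finset α)} (hP : IsPartition P)
    (hQ : IsPartition Q) [Nonempty α] (hconn : ∀ x y, EqvGen (SameBlock (P ∪ Q)) x y) :
    P.card + Q.card ≤ Fintype.card α + 1 := by
  choose p hp using fun x => (hP.2 x).exists
  choose q hq using fun x => (hQ.2 x).exists
  let ι : α → P ⊕ Q := fun x => .inl ⟨p x, (hp x).1⟩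
  let κ : α → P ⊕ Q := fun x => .inr ⟨q x, (hq x).1⟩
  let G : SimpleGraph (P ⊕ Q) := SimpleGraph.fromRel fun u v => ∃ x, u = ι x ∧ v = κ x
  have hadj : ∀ x, G.Adj (ι x) (κ x) := fun x =>
    (SimpleGraph.fromRel_adj _ _ _).2 ⟨Sum.inl_ne_inr, Or.inl ⟨x, rfl, rfl⟩⟩
  have hι : ∀ {A : Finset α} (hA : A ∈ P) {x : α}, x ∈ A → ι x = .inl ⟨A, hA⟩ := fun hA x hx =>
    congrArg Sum.inl (Subtype.ext (hP.eq_of_mem (hp x).1 hA (hp x).2 hx))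
  have hκ : ∀ {B : Finset α} (hB : B ∈ Q) {x : α}, x ∈ B → κ x = .inr ⟨B, hB⟩ := fun hB x hx =>
    congrArg Sum.inr (Subtype.ext (hQ.eq_of_mem (hq x).1 hB (hq x).2 hx))
  have hreach : ∀ x y, G.Reachable (ι x) (ι y) := by
    intro x y
    induction hconn x y with
    | rel x y hxy =>
        obtain ⟨D, hD, hx, hy⟩ := hxy
        rcases mem_union.1 hD with hD | hD
        · rw [hι hD hx, hι hD hy]
        · exact (hadj x).reachable.trans (hκ hD hx ▸ hκ hD hy ▸ (hadj y).reachable.symm)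
    | refl x => rfl
    | symm x y _ ih => exact ih.symm
    | trans x y z _ _ ih₁ ih₂ => exact ih₁.trans ih₂
  have hvert : ∀ w, ∃ x, G.Reachable w (ι x) := by
    rintro (⟨A, hA⟩ | ⟨B, hB⟩)
    · obtain ⟨x, hx⟩ := hP.1 A hA
      exact ⟨x, by rw [hι hA hx]⟩
    · obtain ⟨x, hx⟩ := hQ.1 B hB
      exact ⟨x, hκ hB hx ▸ (hadj x).reachable.symm⟩
  have : Nonempty (P ⊕ Q) := ⟨ι (Classical.arbitrary α)⟩
  have hG : G.Connected := ⟨fun u v => by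
    obtain ⟨x, hx⟩ := hvert u
    obtain ⟨y, hy⟩ := hvert v
    exact hx.trans ((hreach x y).trans hy.symm)⟩
  have hedges : Nat.card G.edgeSet ≤ Nat.card α := by
    refine Nat.card_le_card_of_surjective (fun x => ⟨s(ι x, κ x), hadj x⟩) ?_
    rintro ⟨e, he⟩
    induction e using Sym2.ind with
    | _ u v =>
      rcases ((SimpleGraph.fromRel_adj _ _ _).1 ((SimpleGraph.mem_edgeSet _).1 he)).2 with
        ⟨x, rfl, rfl⟩ | ⟨x, rfl, rfl⟩
      · exact ⟨x, rfl⟩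
      · exact ⟨x, Subtype.ext Sym2.eq_swap⟩
  have := hG.card_vert_le_card_edgeSet_add_one
  simp only [Nat.card_eq_fintype_card, Fintype.card_sum, Fintype.card_coe] at this hedges
  omega

end Euler

section Intervals

variable {α : Type*} [LinearOrder α] [LocallyFiniteOrder α] [DecidableEq α]

lemma IsNonCrossing.mergeBlocks {P : Finset (Finset α)} (hP : IsPartition P)
    (hNC : IsNonCrossing P) {u t : α} (hut : u < t)
    (hI : ∀ D ∈ P, D ⊆ Ioc u t ∨ Disjoint D (Ioc u t))
    {C₁ C₂ : Finset α} (h₁ : C₁ ∈ P) (h₂ : C₂ ∈ P) (hu : u ∈ C₁) (ht : t ∈ C₂) :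
    IsNonCrossing (mergeBlocks P C₁ C₂) := by
  have htI : t ∈ Ioc u t := mem_Ioc.2 ⟨hut, le_rfl⟩
  have hC₁ : Disjoint C₁ (Ioc u t) := (hI C₁ h₁).resolve_left fun h => by simpa using h hu
  have hC₂ : C₂ ⊆ Ioc u t := (hI C₂ h₂).resolve_right fun h => disjoint_left.1 h ht htI
  have key : ∀ D ∈ P, D ≠ C₁ → D ≠ C₂ → NoCrossing (C₁ ∪ C₂) D := by
    intro D hD hD₁ hD₂
    rcases hI D hD with hin | hout
    · -- no point of `C₁`, nor `t`, lies strictly between two points of `D ⊆ (u, t]`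
      have h : NoCrossing (insert t C₁) D := by
        refine (noCrossing_of_not_between fun a ha b hb z hz hab => ?_).symm
        have ha := mem_Ioc.1 (hin ha)
        have hb := mem_Ioc.1 (hin hb)
        rcases mem_insert.1 hz with rfl | hz
        · exact absurd (hab.2.trans_le hb.2) (lt_irrefl _)
        · exact disjoint_left.1 hC₁ hz (mem_Ioc.2 ⟨ha.1.trans hab.1, hab.2.le.trans hb.2⟩)
      have htD : t ∉ D := fun htD => hD₂ (hP.eq_of_mem hD h₂ htD ht)
      have := h.union (hNC.noCrossing h₂ hD (Ne.symm hD₂)) (mem_insert_self t C₁) ht htD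
      rwa [insert_union, insert_eq_of_mem (mem_union_right _ ht)] at this
    · -- no point of `D` lies strictly between two points of `insert u C₂ ⊆ [u, t]`
      have hle : ∀ c ∈ insert u C₂, u ≤ c ∧ c ≤ t := fun c hc => by
        rcases mem_insert.1 hc with rfl | hc
        · exact ⟨le_rfl, hut.le⟩
        · exact (mem_Ioc.1 (hC₂ hc)).imp_left le_of_lt
      have h : NoCrossing (insert u C₂) D := noCrossing_of_not_between fun a ha b hb z hz hab =>
        disjoint_left.1 hout hz
          (mem_Ioc.2 ⟨(hle a ha).1.trans_lt hab.1, hab.2.le.trans (hle b hb).2⟩)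
      have huD : u ∉ D := fun huD => hD₁ (hP.eq_of_mem hD h₁ huD hu)
      have := (hNC.noCrossing h₁ hD (Ne.symm hD₁)).union h hu (mem_insert_self u C₂) huD
      rwa [union_insert, insert_eq_of_mem (mem_union_left _ hu)] at this
  intro X hX Y hY hXY
  rcases mem_mergeBlocks.1 hX with rfl | ⟨hX, hX₁, hX₂⟩ <;>
    rcases mem_mergeBlocks.1 hY with rfl | ⟨hY, hY₁, hY₂⟩
  · exact absurd rfl hXY
  · exact (key Y hY hY₁ hY₂).1
  · exact (key X hX hX₁ hX₂).2
  · exact hNC X hX Y hY hXY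

end Intervals

/-- Among the blocks avoiding `0`, one with the smallest maximum is an interval. -/
lemma exists_Ioc_mem {m : ℕ} {ρ : Finset (Finset (Fin m))} (hρ : ρ ∈ NC m)
    {D : Finset (Fin m)} (hD : D ∈ ρ) (hD0 : ∀ z ∈ D, z.1 ≠ 0) :
    ∃ u t : Fin m, u < t ∧ Ioc u t ∈ ρ := by
  obtain ⟨hP, hNC⟩ := mem_NC_iff.1 hρ
  obtain ⟨B, hB, hmin⟩ := exists_min_image (ρ.filter fun B => ∀ z ∈ B, z.1 ≠ 0)
    (fun B => B.sup Fin.val) ⟨D, mem_filter.2 ⟨hD, hD0⟩⟩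
  obtain ⟨hBρ, hB0⟩ := mem_filter.1 hB
  have hBne := hP.1 B hBρ
  obtain ⟨t, htB, ht⟩ := exists_mem_eq_sup B hBne Fin.val
  set s := B.min' hBne
  have hsB : s ∈ B := min'_mem B hBne
  have hs0 : s.1 ≠ 0 := hB0 s hsB
  have hst : s ≤ t := min'_le B t htB
  have hBIcc : ∀ z, z ∈ B ↔ s ≤ z ∧ z ≤ t := by
    refine fun z => ⟨fun hz => ⟨min'_le B z hz, Fin.le_def.2 (ht ▸ le_sup (f := Fin.val) hz)⟩,
      fun ⟨hsz, hzt⟩ => ?_⟩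
    by_contra hzB
    obtain ⟨E, ⟨hE, hzE⟩, -⟩ := hP.2 z
    have hEB : E ≠ B := fun h => hzB (h ▸ hzE)
    have hsz : s < z := lt_of_le_of_ne hsz fun h => hzB (h ▸ hsB)
    have hzt : z < t := lt_of_le_of_ne hzt fun h => hzB (h ▸ htB)
    by_cases hE0 : ∃ e ∈ E, e.1 = 0
    · obtain ⟨e, he, he0⟩ := hE0
      exact hNC E hE B hBρ hEB ⟨e, he, z, hzE, s, hsB, t, htB, by omega, hsz, hzt⟩
    -- `E` ends beyond `t`, so it crosses `B`
    obtain ⟨e, he, hes⟩ := exists_mem_eq_sup E ⟨z, hzE⟩ Fin.val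
    have hte : t.1 ≤ e.1 :=
      ht ▸ hes ▸ hmin E (mem_filter.2 ⟨hE, fun e he h => hE0 ⟨e, he, h⟩⟩)
    have het : e ≠ t := fun h => hEB (hP.eq_of_mem hE hBρ (h ▸ he) htB)
    exact hNC B hBρ E hE hEB.symm ⟨s, hsB, t, htB, z, hzE, e, he, hsz, hzt, by omega⟩
  refine ⟨⟨s.1 - 1, by omega⟩, t, Fin.lt_def.2 (show s.1 - 1 < t.1 by omega), ?_⟩
  convert hBρ using 1
  ext z
  rw [mem_Ioc, hBIcc, Fin.lt_def, Fin.le_def, Fin.le_def]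
  show s.1 - 1 < z.1 ∧ _ ↔ _
  omega

lemma image_filter_of_subset_range {α β : Type*} [Fintype α] [DecidableEq β] {e : α → β}
    {B : Finset β} (hB : ∀ b ∈ B, ∃ i, e i = b) :
    (univ.filter fun i => e i ∈ B).image e = B := by
  ext b
  simp only [mem_image, mem_filter, mem_univ, true_and]
  refine ⟨fun ⟨i, hi, hib⟩ => hib ▸ hi, fun hb => ?_⟩
  obtain ⟨i, rfl⟩ := hB b hb
  exact ⟨i, hb, rfl⟩

section Restriction

variable {α β : Type*} [Fintype α] [DecidableEq α] [DecidableEq β]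

def restrictVia (e : α → β) (σ : Finset (Finset β)) : Finset (Finset α) :=
  (σ.image fun B => univ.filter fun i => e i ∈ B).filter fun C => C.Nonempty

lemma restrictOdd_eq {n : ℕ} (σ : Finset (Finset (Fin (2 * n)))) :
    restrictOdd n σ = restrictVia (oddE n) σ := rfl

lemma restrictEven_eq {n : ℕ} (σ : Finset (Finset (Fin (2 * n)))) :
    restrictEven n σ = restrictVia (evenE n) σ := rfl

variable {e : α → β} {σ : Finset (Finset β)}

lemma mem_restrictVia {C : Finset α} :
    C ∈ restrictVia e σ ↔ (∃ B ∈ σ, univ.filter (fun i => e i ∈ B) = C) ∧ C.Nonempty := by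
  simp only [restrictVia, mem_filter, mem_image]

lemma sameBlock_restrictVia {i j : α} :
    SameBlock (restrictVia e σ) i j ↔ SameBlock σ (e i) (e j) := by
  constructor
  · rintro ⟨C, hC, hi, hj⟩
    obtain ⟨⟨B, hB, rfl⟩, -⟩ := mem_restrictVia.1 hC
    exact ⟨B, hB, (mem_filter.1 hi).2, (mem_filter.1 hj).2⟩
  · rintro ⟨B, hB, hi, hj⟩
    exact ⟨_, mem_restrictVia.2 ⟨⟨B, hB, rfl⟩, i, by simpa⟩, by simpa, by simpa⟩

lemma IsPartition.restrictVia (hσ : IsPartition σ) : IsPartition (restrictVia e σ) := by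
  refine ⟨fun C hC => (mem_restrictVia.1 hC).2, fun i => ?_⟩
  obtain ⟨B, ⟨hB, hiB⟩, -⟩ := hσ.2 (e i)
  refine ⟨_, ⟨mem_restrictVia.2 ⟨⟨B, hB, rfl⟩, i, by simpa⟩, by simpa⟩, ?_⟩
  rintro C ⟨hC, hiC⟩
  obtain ⟨⟨B', hB', rfl⟩, -⟩ := mem_restrictVia.1 hC
  rw [hσ.eq_of_mem hB' hB (mem_filter.1 hiC).2 hiB]

lemma IsNonCrossing.restrictVia [LinearOrder α] [LinearOrder β] (he : StrictMono e)
    (hσ : IsNonCrossing σ) : IsNonCrossing (restrictVia e σ) := by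
  intro C hC C' hC' hne ⟨i, hi, p, hp, k, hk, q, hq, h₁, h₂, h₃⟩
  obtain ⟨⟨B, hB, rfl⟩, -⟩ := mem_restrictVia.1 hC
  obtain ⟨⟨B', hB', rfl⟩, -⟩ := mem_restrictVia.1 hC'
  simp only [mem_filter, mem_univ, true_and] at hi hp hk hq
  exact hσ B hB B' hB' (fun h => hne (h ▸ rfl))
    ⟨e i, hi, e p, hp, e k, hk, e q, hq, he h₁, he h₂, he h₃⟩

lemma restrictVia_mergeBlocks {C₁ C₂ : Finset β} (h : ∀ i, e i ∉ C₁ ∧ e i ∉ C₂) :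
    restrictVia e (mergeBlocks σ C₁ C₂) = restrictVia e σ := by
  ext C
  simp only [mem_restrictVia, mem_mergeBlocks]
  constructor
  · rintro ⟨⟨B, hB | ⟨hB, -⟩, rfl⟩, i, hi⟩
    · simp only [hB, mem_filter, mem_univ, mem_union, true_and] at hi
      exact absurd hi (by simp [h])
    · exact ⟨⟨B, hB, rfl⟩, i, hi⟩
  · rintro ⟨⟨B, hB, rfl⟩, i, hi⟩
    have hiB := (mem_filter.1 hi).2
    exact ⟨⟨B, Or.inr ⟨hB, fun h' => (h i).1 (h' ▸ hiB), fun h' => (h i).2 (h' ▸ hiB)⟩, rfl⟩,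
      i, hi⟩

end Restriction

section Interlacing

variable {n : ℕ}

lemma oddE_strictMono : StrictMono (oddE n) := fun i j h => by
  simp only [oddE, Fin.lt_def] at h ⊢
  omega

lemma evenE_strictMono : StrictMono (evenE n) := fun i j h => by
  simp only [evenE, Fin.lt_def] at h ⊢
  omega

lemma oddE_ne_evenE (i j : Fin n) : oddE n i ≠ evenE n j := by
  simp only [oddE, evenE, ne_eq, Fin.mk.injEq]
  omega

lemma oddE_lt_evenE {i j : Fin n} : oddE n i < evenE n j ↔ i ≤ j := by
  simp only [oddE, evenE, Fin.lt_def, Fin.le_def]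
  omega

lemma evenE_lt_oddE {i j : Fin n} : evenE n i < oddE n j ↔ i < j := by
  simp only [oddE, evenE, Fin.lt_def]
  omega

lemma exists_oddE_eq {z : Fin (2 * n)} : (∃ i, oddE n i = z) ↔ z.1 % 2 = 0 :=
  ⟨fun ⟨i, hi⟩ => by simp [← hi, oddE], fun h =>
    ⟨⟨z.1 / 2, by omega⟩, Fin.ext (by simp only [oddE]; omega)⟩⟩

lemma exists_evenE_eq {z : Fin (2 * n)} : (∃ i, evenE n i = z) ↔ z.1 % 2 = 1 :=
  ⟨fun ⟨i, hi⟩ => by simp [← hi, evenE], fun h =>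
    ⟨⟨z.1 / 2, by omega⟩, Fin.ext (by simp only [evenE]; omega)⟩⟩

lemma SameParity.mem_range {σ : Finset (Finset (Fin (2 * n)))} (hS : SameParity σ)
    {B : Finset (Fin (2 * n))} (hB : B ∈ σ) {b : Fin (2 * n)} (hb : b ∈ B) :
    (∀ z ∈ B, ∃ i, oddE n i = z) ∨ ∀ z ∈ B, ∃ i, evenE n i = z := by
  simp only [exists_oddE_eq, exists_evenE_eq]
  rcases Nat.mod_two_eq_zero_or_one b.1 with h | h
  · exact Or.inl fun z hz => hS B hB z hz b hb ▸ h
  · exact Or.inr fun z hz => hS B hB z hz b hb ▸ h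

lemma interlace_restrictOdd_restrictEven {σ : Finset (Finset (Fin (2 * n)))}
    (hσ : ∀ B ∈ σ, B.Nonempty) (hS : SameParity σ) :
    interlace (restrictOdd n σ) (restrictEven n σ) = σ := by
  ext B
  simp only [interlace, restrictOdd_eq, restrictEven_eq, mem_union, mem_image, mem_restrictVia]
  constructor
  · rintro (⟨C, ⟨⟨B, hB, rfl⟩, i, hi⟩, rfl⟩ | ⟨C, ⟨⟨B, hB, rfl⟩, i, hi⟩, rfl⟩) <;>
      have hi := (mem_filter.1 hi).2
    · rcases hS.mem_range hB hi with h | h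
      · rwa [image_filter_of_subset_range h]
      · obtain ⟨j, hj⟩ := h _ hi
        exact absurd hj (oddE_ne_evenE i j).symm
    · rcases hS.mem_range hB hi with h | h
      · obtain ⟨j, hj⟩ := h _ hi
        exact absurd hj (oddE_ne_evenE j i)
      · rwa [image_filter_of_subset_range h]
  · intro hB
    obtain ⟨b, hb⟩ := hσ B hB
    rcases hS.mem_range hB hb with h | h <;> obtain ⟨i, rfl⟩ := h b hb
    · exact Or.inl ⟨_, ⟨⟨B, hB, rfl⟩, i, by simpa⟩, image_filter_of_subset_range h⟩
    · exact Or.inr ⟨_, ⟨⟨B, hB, rfl⟩, i, by simpa⟩, image_filter_of_subset_range h⟩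

lemma card_interlace {γ δ : Finset (Finset (Fin n))} (hγ : ∀ A ∈ γ, A.Nonempty) :
    (interlace γ δ).card = γ.card + δ.card := by
  rw [interlace, card_union_of_disjoint, card_image_of_injective _
    (image_injective oddE_strictMono.injective), card_image_of_injective _
    (image_injective evenE_strictMono.injective)]
  simp only [disjoint_left, mem_image, not_exists, not_and]
  rintro _ ⟨A, hA, rfl⟩ C _ hCA
  obtain ⟨a, ha⟩ := hγ A hA
  obtain ⟨c, -, hc⟩ := mem_image.1 (hCA ▸ mem_image_of_mem (oddE n) ha)
  exact oddE_ne_evenE a c hc.symm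

end Interlacing

section ZeroHat

variable {n : ℕ}

lemma mem_zeroHat {B : Finset (Fin (2 * n))} :
    B ∈ zeroHat n ↔ ∃ i, {oddE n i, evenE n i} = B := by
  simp [zeroHat]

lemma card_zeroHat : (zeroHat n).card = n := by
  rw [zeroHat, card_image_of_injective, card_univ, Fintype.card_fin]
  intro i j h
  have h : ({oddE n i, evenE n i} : Finset _) = {oddE n j, evenE n j} := h
  have : oddE n i ∈ ({oddE n j, evenE n j} : Finset _) := h ▸ mem_insert_self _ _
  rcases mem_insert.1 this with h | h
  · exact oddE_strictMono.injective h
  · exact absurd (mem_singleton.1 h) (oddE_ne_evenE i j)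

lemma isPartition_zeroHat : IsPartition (zeroHat n) := by
  refine ⟨fun B hB => ?_, fun z => ?_⟩
  · obtain ⟨i, rfl⟩ := mem_zeroHat.1 hB
    exact insert_nonempty _ _
  · let i : Fin n := ⟨z.1 / 2, by omega⟩
    have hz : z ∈ ({oddE n i, evenE n i} : Finset _) := by
      simp only [mem_insert, mem_singleton, Fin.ext_iff, oddE, evenE, i]
      omega
    refine ⟨_, ⟨mem_zeroHat.2 ⟨i, rfl⟩, hz⟩, ?_⟩
    rintro B ⟨hB, hzB⟩
    obtain ⟨j, rfl⟩ := mem_zeroHat.1 hB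
    have : j = i := by
      simp only [mem_insert, mem_singleton, Fin.ext_iff, oddE, evenE] at hzB
      ext
      simp only [i]
      omega
    rw [this]

lemma noCrossing_of_mem_zeroHat {B : Finset (Fin (2 * n))} (hB : B ∈ zeroHat n)
    (D : Finset (Fin (2 * n))) : NoCrossing B D := by
  obtain ⟨i, rfl⟩ := mem_zeroHat.1 hB
  refine noCrossing_of_not_between fun a ha b hb z _ hz => ?_
  simp only [mem_insert, mem_singleton, oddE, evenE] at ha hb
  rcases ha with rfl | rfl <;> rcases hb with rfl | rfl <;> simp only [Fin.lt_def] at hz <;> omega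

lemma IsNonCrossing.union_zeroHat {σ : Finset (Finset (Fin (2 * n)))} (hσ : IsNonCrossing σ) :
    IsNonCrossing (σ ∪ zeroHat n) := by
  intro B hB D hD hBD
  rcases mem_union.1 hB with hB | hB
  · rcases mem_union.1 hD with hD | hD
    · exact hσ B hB D hD hBD
    · exact (noCrossing_of_mem_zeroHat hD B).2
  · exact (noCrossing_of_mem_zeroHat hB D).1

/-- The components of `σ ∪ 0̂ₙ` form a non-crossing partition above `σ` and `0̂ₙ`, so the join
condition leaves a single one, and Euler's inequality applies. -/
lemma card_le_of_join_eq_one (hn : 1 ≤ n) {σ : Finset (Finset (Fin (2 * n)))}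
    (hσ : σ ∈ NC (2 * n)) (hJ : ∀ ρ ∈ NC (2 * n), ncle σ ρ → ncle (zeroHat n) ρ → ncle {univ} ρ) :
    σ.card ≤ n + 1 := by
  obtain ⟨hσP, hσNC⟩ := mem_NC_iff.1 hσ
  have hK : components (SameBlock (σ ∪ zeroHat n)) ∈ NC (2 * n) :=
    mem_NC_iff.2 ⟨isPartition_components _, isNonCrossing_components hσNC.union_zeroHat⟩
  obtain ⟨K, hK, hKuniv⟩ := hJ _ hK
    (fun B hB => ncle_components (mem_union_left _ hB) (hσP.1 B hB))
    (fun B hB => ncle_components (mem_union_right _ hB) (isPartition_zeroHat.1 B hB))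
    univ (mem_singleton_self _)
  have : Nonempty (Fin (2 * n)) := ⟨⟨0, by omega⟩⟩
  have := hσP.card_add_card_le isPartition_zeroHat fun x y =>
    (mem_components_iff hK (hKuniv (mem_univ x))).1 (hKuniv (mem_univ y))
  rw [card_zeroHat, Fintype.card_fin] at this
  omega

end ZeroHat

section KrewerasRelation

variable {n : ℕ}

/-- The barred points `x̄` and `ȳ` are related when every block of `γ` lies on one side of the cut
`(x, y]`: the point `a` lies in `(x, y]` (or `(y, x]`) exactly when `a ≤ x ↔ a ≤ y` fails.
Its classes are the blocks of the Kreweras complement of `γ`. -/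
def KrewerasRel (γ : Finset (Finset (Fin n))) (x y : Fin n) : Prop :=
  ∀ A ∈ γ, ∀ a ∈ A, ∀ b ∈ A, ((a ≤ x ↔ a ≤ y) ↔ (b ≤ x ↔ b ≤ y))

variable {γ : Finset (Finset (Fin n))}

lemma KrewerasRel.refl (x : Fin n) : KrewerasRel γ x x := fun _ _ _ _ _ _ => by tauto

lemma KrewerasRel.symm {x y : Fin n} (h : KrewerasRel γ x y) : KrewerasRel γ y x :=
  fun A hA a ha b hb => by have := h A hA a ha b hb; tauto

lemma KrewerasRel.trans {x y z : Fin n} (h₁ : KrewerasRel γ x y) (h₂ : KrewerasRel γ y z) :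
    KrewerasRel γ x z :=
  fun A hA a ha b hb => by have := h₁ A hA a ha b hb; have := h₂ A hA a ha b hb; tauto

lemma noCrossing_of_interlace {τ : Finset (Finset (Fin n))} (h : IsNonCrossing (interlace γ τ))
    {A C : Finset (Fin n)} (hA : A ∈ γ) (hC : C ∈ τ) {a : Fin n} (ha : a ∈ A) :
    NoCrossing (A.image (oddE n)) (C.image (evenE n)) := by
  refine h.noCrossing (mem_union_left _ (mem_image_of_mem _ hA))
    (mem_union_right _ (mem_image_of_mem _ hC)) fun hAC => ?_
  obtain ⟨c, -, hc⟩ := mem_image.1 (hAC ▸ mem_image_of_mem (oddE n) ha)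
  exact oddE_ne_evenE a c hc.symm

/-- A block of `γ` with points both inside and outside `(x, y]` would cross the block of `τ`
containing `x` and `y`. -/
lemma krewerasRel_of_sameBlock {τ : Finset (Finset (Fin n))} (h : IsNonCrossing (interlace γ τ))
    {x y : Fin n} (hxy : SameBlock τ x y) : KrewerasRel γ x y := by
  wlog hle : x ≤ y generalizing x y
  · exact (this hxy.symm (le_of_not_ge hle)).symm
  obtain ⟨C, hC, hx, hy⟩ := hxy
  have hcross : ∀ A ∈ γ, ∀ a ∈ A, ∀ b ∈ A, x < a → a ≤ y → b ≤ x ∨ y < b → False := by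
    intro A hA a ha b hb hxa hay hb'
    have hAC := noCrossing_of_interlace h hA hC ha
    have hx' := mem_image_of_mem (evenE n) hx
    have hy' := mem_image_of_mem (evenE n) hy
    have ha' := mem_image_of_mem (oddE n) ha
    have hb'' := mem_image_of_mem (oddE n) hb
    rcases hb' with hbx | hyb
    · exact hAC.1 ⟨_, hb'', _, ha', _, hx', _, hy', oddE_lt_evenE.2 hbx, evenE_lt_oddE.2 hxa,
        oddE_lt_evenE.2 hay⟩
    · exact hAC.2 ⟨_, hx', _, hy', _, ha', _, hb'', evenE_lt_oddE.2 hxa, oddE_lt_evenE.2 hay,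
        evenE_lt_oddE.2 hyb⟩
  intro A hA a ha b hb
  by_contra hab
  have : (x < a ∧ a ≤ y ∧ (b ≤ x ∨ y < b)) ∨ (x < b ∧ b ≤ y ∧ (a ≤ x ∨ y < a)) := by omega
  rcases this with ⟨h₁, h₂, h₃⟩ | ⟨h₁, h₂, h₃⟩
  exacts [hcross A hA a ha b hb h₁ h₂ h₃, hcross A hA b hb a ha h₁ h₂ h₃]

end KrewerasRelation

section Counting

variable {α : Type*}

lemma IsPartition.card_le {P : Finset (Finset α)} (hP : IsPartition P) {S : Finset α}
    (hS : ∀ x ∈ S, ∀ y ∈ S, SameBlock P x y → x = y) : S.card ≤ P.card := by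
  choose p hp using fun x => (hP.2 x).exists
  exact card_le_card_of_injOn p (fun x _ => (hp x).1)
    fun x hx y hy hxy => hS x hx y hy ⟨p x, (hp x).1, (hp x).2, hxy ▸ (hp y).2⟩

variable {n : ℕ} {γ δ : Finset (Finset (Fin n))}

open Classical in
noncomputable def blockMaxima (γ : Finset (Finset (Fin n))) : Finset (Fin n) :=
  univ.filter fun x => ∀ b, SameBlock γ x b → b ≤ x

open Classical in
noncomputable def blockMinima (δ : Finset (Finset (Fin n))) : Finset (Fin n) :=
  univ.filter fun x => ∀ b, SameBlock δ x b → x ≤ b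

open Classical in
noncomputable def krewerasMinima (γ : Finset (Finset (Fin n))) : Finset (Fin n) :=
  univ.filter fun x => ∀ y, KrewerasRel γ x y → x ≤ y

lemma mem_blockMaxima {x : Fin n} : x ∈ blockMaxima γ ↔ ∀ b, SameBlock γ x b → b ≤ x := by
  unfold blockMaxima
  simp

lemma mem_blockMinima {x : Fin n} : x ∈ blockMinima δ ↔ ∀ b, SameBlock δ x b → x ≤ b := by
  unfold blockMinima
  simp

lemma mem_krewerasMinima {x : Fin n} :
    x ∈ krewerasMinima γ ↔ ∀ y, KrewerasRel γ x y → x ≤ y := by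
  unfold krewerasMinima
  simp

lemma card_blockMaxima_le (hγ : IsPartition γ) : (blockMaxima γ).card ≤ γ.card :=
  hγ.card_le fun x hx y hy hxy =>
    le_antisymm (mem_blockMaxima.1 hy x hxy.symm) (mem_blockMaxima.1 hx y hxy)

lemma card_blockMinima_le (hδ : IsPartition δ) : (blockMinima δ).card ≤ δ.card :=
  hδ.card_le fun x hx y hy hxy =>
    le_antisymm (mem_blockMinima.1 hx y hxy) (mem_blockMinima.1 hy x hxy.symm)

lemma blockMaxima_union_krewerasMinima : blockMaxima γ ∪ krewerasMinima γ = univ := by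
  refine eq_univ_of_forall fun x => ?_
  rw [mem_union, mem_blockMaxima, mem_krewerasMinima]
  by_contra hx
  simp only [not_or, not_forall, not_le, exists_prop] at hx
  obtain ⟨⟨b, ⟨A, hA, hxA, hbA⟩, hxb⟩, y, hxy, hyx⟩ := hx
  have := hxy A hA x hxA b hbA
  omega

/-- The first point of the Kreweras class of the last point `n - 1` is the last point of its
block of `γ`. -/
lemma blockMaxima_inter_krewerasMinima_nonempty (hn : 1 ≤ n) :
    (blockMaxima γ ∩ krewerasMinima γ).Nonempty := by
  classical
  let last : Fin n := ⟨n - 1, by omega⟩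
  let S := univ.filter (KrewerasRel γ last)
  have hS : S.Nonempty := ⟨last, by simp [S, KrewerasRel.refl]⟩
  have hx₀ := (mem_filter.1 (min'_mem S hS)).2
  refine ⟨S.min' hS, mem_inter.2 ⟨mem_blockMaxima.2 ?_, mem_krewerasMinima.2 ?_⟩⟩
  · rintro b ⟨A, hA, hxA, hbA⟩
    have := hx₀ A hA _ hxA b hbA
    have hlast : last.1 = n - 1 := rfl
    omega
  · exact fun y hy => min'_le S y (mem_filter.2 ⟨mem_univ _, hx₀.trans hy⟩)

end Counting

section KrewerasMaximal

variable {n : ℕ} {γ δ : Finset (Finset (Fin n))}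

/-- Every Kreweras minimum is a block minimum of `δ`; there are at least `n + 1 - #γ` of the
former and at most `#δ` of the latter. -/
lemma blockMinima_subset_krewerasMinima (hn : 1 ≤ n) (hγ : IsPartition γ) (hδ : IsPartition δ)
    (hγδ : IsNonCrossing (interlace γ δ)) (hcard : γ.card + δ.card ≤ n + 1) :
    blockMinima δ ⊆ krewerasMinima γ := by
  have hsub : krewerasMinima γ ⊆ blockMinima δ := fun x hx => mem_blockMinima.2 fun b hxb =>
    mem_krewerasMinima.1 hx b (krewerasRel_of_sameBlock hγδ hxb)
  have hunion := card_union_add_card_inter (blockMaxima γ) (krewerasMinima γ)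
  rw [blockMaxima_union_krewerasMinima, card_univ, Fintype.card_fin] at hunion
  have hinter := (blockMaxima_inter_krewerasMinima_nonempty (γ := γ) hn).card_pos
  have := card_blockMaxima_le hγ
  have := card_blockMinima_le hδ
  exact (eq_of_subset_of_card_le hsub (by omega)).ge

lemma sameBlock_of_krewerasRel (hδ : IsPartition δ) (hγδ : IsNonCrossing (interlace γ δ))
    (hmin : blockMinima δ ⊆ krewerasMinima γ) {x y : Fin n} (hxy : KrewerasRel γ x y) :
    SameBlock δ x y := by
  have hmin' : ∀ C ∈ δ, ∀ hC : C.Nonempty, C.min' hC ∈ krewerasMinima γ := fun C hCδ hC =>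
    hmin (mem_blockMinima.2 fun b hb => min'_le C b ((hδ.sameBlock_iff hCδ (min'_mem C hC)).1 hb))
  obtain ⟨C, ⟨hC, hxC⟩, -⟩ := hδ.2 x
  obtain ⟨C', ⟨hC', hyC'⟩, -⟩ := hδ.2 y
  have hCne : C.Nonempty := ⟨x, hxC⟩
  have hC'ne : C'.Nonempty := ⟨y, hyC'⟩
  -- the minima of the blocks of `x` and `y` are related Kreweras minima, hence equal
  have hcc' : KrewerasRel γ (C.min' hCne) (C'.min' hC'ne) :=
    ((krewerasRel_of_sameBlock hγδ ⟨C, hC, min'_mem C hCne, hxC⟩).trans hxy).trans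
      (krewerasRel_of_sameBlock hγδ ⟨C', hC', hyC', min'_mem C' hC'ne⟩)
  have : C.min' hCne = C'.min' hC'ne := le_antisymm (mem_krewerasMinima.1 (hmin' C hC hCne) _ hcc')
    (mem_krewerasMinima.1 (hmin' C' hC' hC'ne) _ hcc'.symm)
  exact ⟨C, hC, hxC, hδ.eq_of_mem hC' hC (min'_mem C' _) (this ▸ min'_mem C _) ▸ hyC'⟩

lemma ncle_of_card_add_card_le (hn : 1 ≤ n) (hγ : IsPartition γ) (hδ : IsPartition δ)
    (hγδ : IsNonCrossing (interlace γ δ)) (hcard : γ.card + δ.card ≤ n + 1)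
    {τ : Finset (Finset (Fin n))} (hτ : ∀ T ∈ τ, T.Nonempty)
    (hγτ : IsNonCrossing (interlace γ τ)) : ncle τ δ := by
  intro T hT
  obtain ⟨x, hx⟩ := hτ T hT
  obtain ⟨C, ⟨hC, hxC⟩, -⟩ := hδ.2 x
  refine ⟨C, hC, fun y hy => (hδ.sameBlock_iff hC hxC).1 ?_⟩
  exact sameBlock_of_krewerasRel hδ hγδ (blockMinima_subset_krewerasMinima hn hγ hδ hγδ hcard)
    (krewerasRel_of_sameBlock hγτ ⟨T, hT, hx, hy⟩)

end KrewerasMaximal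

section Join

variable {n : ℕ} {σ : Finset (Finset (Fin (2 * n)))}

lemma SameParity.mergeBlocks (hS : SameParity σ) {C₁ C₂ : Finset (Fin (2 * n))}
    (hodd : ∀ z ∈ C₁ ∪ C₂, z.1 % 2 = 1) : SameParity (mergeBlocks σ C₁ C₂) :=
  fun B hB a ha b hb => by
    rcases mem_mergeBlocks.1 hB with rfl | ⟨hB, -⟩
    exacts [(hodd a ha).trans (hodd b hb).symm, hS B hB a ha b hb]

lemma restrictOdd_mergeBlocks {C₁ C₂ : Finset (Fin (2 * n))}
    (hodd : ∀ z ∈ C₁ ∪ C₂, z.1 % 2 = 1) :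
    restrictOdd n (mergeBlocks σ C₁ C₂) = restrictOdd n σ :=
  restrictVia_mergeBlocks fun i => by
    have := exists_oddE_eq.1 ⟨i, rfl⟩
    exact ⟨fun h => by simp [hodd _ (mem_union_left _ h)] at this,
      fun h => by simp [hodd _ (mem_union_right _ h)] at this⟩

/-- Merging the blocks of two barred points `ū < t̄` such that `(ū, t̄]` is a union of blocks of
`σ` produces a larger partition of the barred points, still compatible with the unbarred ones. -/
lemma not_isKreweras_of_Ioc (hσ : σ ∈ NC (2 * n)) (hS : SameParity σ) {u t : Fin (2 * n)}
    (hu : u.1 % 2 = 1) (ht : t.1 % 2 = 1) (hut : u < t)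
    (hI : ∀ C ∈ σ, C ⊆ Ioc u t ∨ Disjoint C (Ioc u t)) :
    ¬ IsKreweras (restrictOdd n σ) (restrictEven n σ) := by
  intro hK
  obtain ⟨hσP, hσNC⟩ := mem_NC_iff.1 hσ
  obtain ⟨C₁, ⟨hC₁, huC₁⟩, -⟩ := hσP.2 u
  obtain ⟨C₂, ⟨hC₂, htC₂⟩, -⟩ := hσP.2 t
  have hodd : ∀ z ∈ C₁ ∪ C₂, z.1 % 2 = 1 := fun z hz => by
    rcases mem_union.1 hz with hz | hz
    exacts [hS C₁ hC₁ z hz u huC₁ ▸ hu, hS C₂ hC₂ z hz t htC₂ ▸ ht]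
  set σ' := mergeBlocks σ C₁ C₂
  have hσ'P : IsPartition σ' := hσP.mergeBlocks hC₁ hC₂
  have hσ'NC : IsNonCrossing σ' := hσNC.mergeBlocks hσP hut hI hC₁ hC₂ huC₁ htC₂
  have hτ := hK.2.2 (restrictEven n σ')
    (mem_NC_iff.2 ⟨hσ'P.restrictVia, hσ'NC.restrictVia evenE_strictMono⟩)
    (by rwa [← restrictOdd_mergeBlocks hodd, interlace_restrictOdd_restrictEven hσ'P.1
      (hS.mergeBlocks hodd)])
  obtain ⟨a, rfl⟩ := exists_evenE_eq.2 hu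
  obtain ⟨b, rfl⟩ := exists_evenE_eq.2 ht
  have hab : SameBlock (restrictEven n σ') a b :=
    sameBlock_restrictVia.2 ⟨_, mem_mergeBlocks.2 (Or.inl rfl), mem_union_left _ huC₁,
      mem_union_right _ htC₂⟩
  -- the block of `σ` containing both points meets `(ū, t̄]` without lying inside it
  obtain ⟨C, hC, haC, hbC⟩ := sameBlock_restrictVia.1 (hτ.sameBlock hab)
  rcases hI C hC with h | h
  · simpa using h haC
  · exact disjoint_left.1 h hbC (mem_Ioc.2 ⟨hut, le_rfl⟩)

lemma mem_iff_of_ncle_zeroHat {ρ : Finset (Finset (Fin (2 * n)))} (hρ : IsPartition ρ)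
    (h0 : ncle (zeroHat n) ρ) {B : Finset (Fin (2 * n))} (hB : B ∈ ρ) (i : Fin n) :
    oddE n i ∈ B ↔ evenE n i ∈ B := by
  obtain ⟨E, hE, hsub⟩ := h0 _ (mem_zeroHat.2 ⟨i, rfl⟩)
  have ho := hsub (mem_insert_self _ _)
  have he := hsub (mem_insert_of_mem (mem_singleton_self _))
  exact ⟨fun h => hρ.eq_of_mem hE hB ho h ▸ he, fun h => hρ.eq_of_mem hE hB he h ▸ ho⟩

lemma odd_of_Ioc_mem {ρ : Finset (Finset (Fin (2 * n)))} (hρ : IsPartition ρ)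
    (h0 : ncle (zeroHat n) ρ) {u t : Fin (2 * n)} (hut : u < t) (hI : Ioc u t ∈ ρ) :
    u.1 % 2 = 1 ∧ t.1 % 2 = 1 := by
  have hpair := mem_iff_of_ncle_zeroHat hρ h0 hI
  rw [Fin.lt_def] at hut
  constructor <;> by_contra h
  · obtain ⟨i, rfl⟩ := exists_oddE_eq.2 (show u.1 % 2 = 0 by omega)
    have := hpair i
    simp only [mem_Ioc, oddE, evenE, Fin.lt_def, Fin.le_def] at this hut
    omega
  · obtain ⟨i, rfl⟩ := exists_oddE_eq.2 (show t.1 % 2 = 0 by omega)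
    have := hpair i
    simp only [mem_Ioc, oddE, evenE, Fin.lt_def, Fin.le_def] at this hut
    omega

lemma singleton_univ_mem_NC {m : ℕ} (hm : 0 < m) : ({univ} : Finset (Finset (Fin m))) ∈ NC m :=
  ⟨by simpa using ⟨⟨0, hm⟩, mem_univ _⟩, fun a => ⟨univ, by simp, by simp⟩,
    fun B hB D hD hBD => absurd ((mem_singleton.1 hB).trans (mem_singleton.1 hD).symm) hBD⟩

lemma IsKreweras.isJoin (hn : 1 ≤ n) (hσ : σ ∈ NC (2 * n)) (hS : SameParity σ)
    (hK : IsKreweras (restrictOdd n σ) (restrictEven n σ)) :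
    IsJoin (2 * n) σ (zeroHat n) {univ} := by
  refine ⟨singleton_univ_mem_NC (by omega), fun B _ => ⟨univ, mem_singleton_self _, subset_univ B⟩,
    fun B _ => ⟨univ, mem_singleton_self _, subset_univ B⟩, fun ρ hρ hσρ h0ρ => ?_⟩
  simp only [ncle, mem_singleton, forall_eq]
  by_contra hnot
  obtain ⟨hρP, -⟩ := mem_NC_iff.1 hρ
  obtain ⟨D, hD, h0D⟩ := hρP.exists_notMem (by simpa [subset_iff] using hnot) ⟨0, by omega⟩
  obtain ⟨u, t, hut, hI⟩ := exists_Ioc_mem hρ hD fun z hz h =>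
    h0D ((show z = ⟨0, by omega⟩ from Fin.ext h) ▸ hz)
  obtain ⟨hu, ht⟩ := odd_of_Ioc_mem hρP h0ρ hut hI
  exact not_isKreweras_of_Ioc hσ hS hu ht hut
    (fun C hC => hσρ.subset_or_disjoint hρP hC hI) hK

end Join

/-- for `σ ∈ NC_S(2n)`, the restriction to the evens is the Kreweras
complement of the restriction to the odds iff `σ ∨ 0̂ₙ = 1_{2n}`. -/
theorem stmt3 (n : ℕ) (hn : 1 ≤ n) (σ : Finset (Finset (Fin (2 * n))))
    (hσ : σ ∈ NC (2 * n)) (hS : SameParity σ) :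
    IsKreweras (restrictOdd n σ) (restrictEven n σ) ↔
      IsJoin (2 * n) σ (zeroHat n) {Finset.univ} := by
  refine ⟨IsKreweras.isJoin hn hσ hS, fun hJ => ?_⟩
  obtain ⟨hσP, hσNC⟩ := mem_NC_iff.1 hσ
  have hinter := interlace_restrictOdd_restrictEven hσP.1 hS
  have hγ : IsPartition (restrictOdd n σ) := hσP.restrictVia
  have hδ : IsPartition (restrictEven n σ) := hσP.restrictVia
  have hγδ : IsNonCrossing (interlace (restrictOdd n σ) (restrictEven n σ)) := by
    rw [hinter]
    exact hσNC
  have hcard : (restrictOdd n σ).card + (restrictEven n σ).card ≤ n + 1 := by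
    rw [← card_interlace hγ.1, hinter]
    exact card_le_of_join_eq_one hn hσ hJ.2.2.2
  exact ⟨mem_NC_iff.2 ⟨hδ, hσNC.restrictVia evenE_strictMono⟩, hγδ,
    fun τ hτ hγτ => ncle_of_card_add_card_le hn hγ hδ hγδ hcard hτ.1 hγτ⟩
end

section
/- NC_S(2n) decomposes as the disjoint union over π ∈ NC(n) of the sets {σ ∈ NC_S(2n) : σ ∨ 0̂_n = π̂}, where π̂ is the doubling of π and 0̂_n is the doubling of the singleton partition. -/
open Finset

/-! ### Auxiliary development: connectivity via chains -/

section ConnAux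

variable {α : Type*} (U : α → α → Prop)

/-- `a` and `b` are connected by a chain of `U`-steps. -/
def Conn (a b : α) : Prop :=
  ∃ t : ℕ, ∃ f : ℕ → α, f 0 = a ∧ f t = b ∧ ∀ i < t, U (f i) (f (i + 1))

variable {U}

lemma conn_refl (a : α) : Conn U a a :=
  ⟨0, fun _ => a, rfl, rfl, fun i hi => absurd hi (Nat.not_lt_zero i)⟩

lemma conn_single {a b : α} (h : U a b) : Conn U a b := by
  refine ⟨1, fun i => if i = 0 then a else b, by simp, by simp, ?_⟩
  intro i hi
  have : i = 0 := by omega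
  subst this
  simpa using h

lemma conn_trans {a b c : α} : Conn U a b → Conn U b c → Conn U a c := by
  rintro ⟨t, f, hf0, hft, hf⟩ ⟨s, g, hg0, hgs, hg⟩
  refine ⟨t + s, fun i => if i ≤ t then f i else g (i - t), by simp [hf0], ?_, ?_⟩
  · by_cases hs0 : s = 0
    · subst hs0
      simp only [Nat.add_zero, le_refl, if_pos]
      rw [hft, ← hg0]; exact hgs
    · have h1 : ¬ (t + s ≤ t) := by omega
      simp only [h1, if_false]
      have h2 : t + s - t = s := by omega
      rw [h2, hgs]
  · intro i hi
    rcases lt_trichotomy i t with h | h | h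
    · have h2 : i ≤ t := le_of_lt h
      have h3 : i + 1 ≤ t := h
      simp only [h2, h3, if_pos]
      exact hf i h
    · subst h
      have hs1 : 0 < s := by omega
      have h2 : ¬ (i + 1 ≤ i) := by omega
      simp only [le_refl, if_pos, h2, if_false]
      have h3 : i + 1 - i = 1 := by omega
      rw [h3, hft, ← hg0]
      exact hg 0 hs1
    · have h2 : ¬ (i ≤ t) := by omega
      have h3 : ¬ (i + 1 ≤ t) := by omega
      simp only [h2, h3, if_false]
      have h4 : i + 1 - t = (i - t) + 1 := by omega
      rw [h4]
      exact hg (i - t) (by omega)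

lemma conn_symm (hs : ∀ a b, U a b → U b a) {a b : α} : Conn U a b → Conn U b a := by
  rintro ⟨t, f, hf0, hft, hf⟩
  refine ⟨t, fun i => f (t - i), by simp [hft], by simp [hf0], ?_⟩
  intro i hi
  have e1 : t - i = (t - (i + 1)) + 1 := by omega
  have h := hf (t - (i + 1)) (by omega)
  show U (f (t - i)) (f (t - (i + 1)))
  rw [e1]
  exact hs _ _ h

lemma exists_flip (P : ℕ → Prop) (t : ℕ) (h0 : P 0) (ht : ¬ P t) :
    ∃ s < t, P s ∧ ¬ P (s + 1) := by
  by_contra h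
  push_neg at h
  have key : ∀ i, i ≤ t → P i := by
    intro i
    induction i with
    | zero => exact fun _ => h0
    | succ k ih => exact fun hk => h k (by omega) (ih (by omega))
  exact ht (key t le_rfl)

variable [LinearOrder α]

/-- Straddle lemma: a single step `x U y` connected to the start of a chain that
begins strictly inside `(x, y)` and ends outside. -/
lemma conn_straddle (hs : ∀ a b, U a b → U b a)
    (hH : ∀ a b c d : α, U a b → U c d → a < c → c < b → b < d → Conn U a c)
    {x y u v : α} (hxy : U x y) (hcon : Conn U u v)
    (h1 : x < u) (h2 : u < y) (h3 : ¬ (x < v ∧ v < y)) : Conn U x u := by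
  obtain ⟨t, f, hf0, hft, hf⟩ := hcon
  have pre : ∀ s, s ≤ t → Conn U u (f s) := fun s hs' =>
    ⟨s, f, hf0, rfl, fun i hi => hf i (lt_of_lt_of_le hi hs')⟩
  obtain ⟨s, hst, hPs, hPs1⟩ := exists_flip (fun i => x < f i ∧ f i < y) t
    (by show x < f 0 ∧ f 0 < y; rw [hf0]; exact ⟨h1, h2⟩)
    (by show ¬(x < f t ∧ f t < y); rw [hft]; exact h3)
  have hqr : U (f s) (f (s + 1)) := hf s hst
  have hconuq : Conn U u (f s) := pre s (le_of_lt hst)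
  have hconur : Conn U u (f (s + 1)) := pre (s + 1) hst
  rcases not_and_or.mp hPs1 with hx' | hy'
  · rcases (not_lt.mp hx').lt_or_eq with hlt | heq
    · have hc := hH (f (s + 1)) (f s) x y (hs _ _ hqr) hxy hlt hPs.1 hPs.2
      exact conn_trans (conn_symm hs hc) (conn_symm hs hconur)
    · rw [heq] at hconur
      exact conn_symm hs hconur
  · rcases (not_lt.mp hy').lt_or_eq with hlt | heq
    · have hc := hH x y (f s) (f (s + 1)) hxy hqr hPs.1 hPs.2 hlt
      exact conn_trans hc (conn_symm hs hconuq)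
    · rw [← heq] at hconur
      exact conn_trans (conn_single hxy) (conn_symm hs hconur)

/-- Crossing lemma: if `a ~ b`, `c ~ d` with `a < c < b < d` then `a ~ c`. -/
lemma conn_cross (hs : ∀ a b, U a b → U b a)
    (hH : ∀ a b c d : α, U a b → U c d → a < c → c < b → b < d → Conn U a c)
    {a b c d : α} (hab : Conn U a b) (hcd : Conn U c d)
    (h1 : a < c) (h2 : c < b) (h3 : b < d) : Conn U a c := by
  obtain ⟨m, f, hf0, hfm, hf⟩ := hab
  obtain ⟨t, g, hg0, hgt, hg⟩ := hcd
  have hab' : Conn U a b := ⟨m, f, hf0, hfm, hf⟩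
  have hcd' : Conn U c d := ⟨t, g, hg0, hgt, hg⟩
  have preF : ∀ s, s ≤ m → Conn U a (f s) := fun s hs' =>
    ⟨s, f, hf0, rfl, fun i hi => hf i (lt_of_lt_of_le hi hs')⟩
  have preG : ∀ s, s ≤ t → Conn U c (g s) := fun s hs' =>
    ⟨s, g, hg0, rfl, fun i hi => hg i (lt_of_lt_of_le hi hs')⟩
  by_cases hc1 : ∃ i ≤ m, f i = c
  · obtain ⟨i, hi, he⟩ := hc1
    rw [← he]; exact preF i hi
  by_cases hb1 : ∃ i ≤ t, g i = b
  · obtain ⟨i, hi, he⟩ := hb1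
    have hcb : Conn U c b := by rw [← he]; exact preG i hi
    exact conn_trans hab' (conn_symm hs hcb)
  push_neg at hc1 hb1
  obtain ⟨s₁, hs₁, hxP, hyP⟩ := exists_flip (fun i => f i < c) m
    (by show f 0 < c; rw [hf0]; exact h1)
    (by show ¬ f m < c; rw [hfm]; exact not_lt.mpr (le_of_lt h2))
  have hx : f s₁ < c := hxP
  have hy : c < f (s₁ + 1) :=
    lt_of_le_of_ne (not_lt.mp hyP) (Ne.symm (hc1 (s₁ + 1) hs₁))
  have hxy : U (f s₁) (f (s₁ + 1)) := hf s₁ hs₁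
  have hax : Conn U a (f s₁) := preF s₁ (le_of_lt hs₁)
  have hay : Conn U a (f (s₁ + 1)) := preF (s₁ + 1) hs₁
  obtain ⟨s₂, hs₂, huP, hwP⟩ := exists_flip (fun i => g i < b) t
    (by show g 0 < b; rw [hg0]; exact h2)
    (by show ¬ g t < b; rw [hgt]; exact not_lt.mpr (le_of_lt h3))
  have hu : g s₂ < b := huP
  have hw : b < g (s₂ + 1) :=
    lt_of_le_of_ne (not_lt.mp hwP) (Ne.symm (hb1 (s₂ + 1) hs₂))
  have huw : U (g s₂) (g (s₂ + 1)) := hg s₂ hs₂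
  have hcu : Conn U c (g s₂) := preG s₂ (le_of_lt hs₂)
  have hcw : Conn U c (g (s₂ + 1)) := preG (s₂ + 1) hs₂
  set x := f s₁ with hxdef
  set y := f (s₁ + 1) with hydef
  set u := g s₂ with hudef
  set w := g (s₂ + 1) with hwdef
  by_cases hd : x < d ∧ d < y
  · by_cases haw : u < a ∧ a < w
    · rcases lt_trichotomy x u with hxu | hxu | hxu
      · rcases lt_trichotomy y w with hyw | hyw | hyw
        · -- x < u < y < w : interleaved steps
          have hc := hH x y u w hxy huw hxu (lt_trans haw.1 (lt_trans h1 hy)) hyw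
          exact conn_trans hax (conn_trans hc (conn_symm hs hcu))
        · have h' : Conn U c y := by rw [hyw]; exact hcw
          exact conn_trans hay (conn_symm hs h')
        · -- (x,y) ⊃ (u,w): straddle step (u,w) with chain a → x
          have hc := conn_straddle hs hH huw hax haw.1 haw.2
            (by intro hcon; exact absurd (lt_trans hcon.1 hxu) (lt_irrefl _))
          exact conn_trans (conn_symm hs hc) (conn_symm hs hcu)
      · have h' : Conn U c x := by rw [hxu]; exact hcu
        exact conn_trans hax (conn_symm hs h')
      · rcases lt_trichotomy y w with hyw | hyw | hyw
        · -- (u,w) ⊃ (x,y): straddle step (x,y) with chain c → u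
          have hc := conn_straddle hs hH hxy hcu hx hy
            (by intro hcon; exact absurd (lt_trans hcon.1 hxu) (lt_irrefl _))
          exact conn_trans hax hc
        · have h' : Conn U c y := by rw [hyw]; exact hcw
          exact conn_trans hay (conn_symm hs h')
        · -- u < x < w < y : interleaved steps
          have hc := hH u w x y huw hxy hxu (lt_trans hx (lt_trans h2 hw)) hyw
          exact conn_trans hax (conn_trans (conn_symm hs hc) (conn_symm hs hcu))
    · -- straddle step (u,w) with chain b → a
      have hc := conn_straddle hs hH huw (conn_symm hs hab') hu hw haw
      exact conn_trans hab' (conn_trans (conn_symm hs hc) (conn_symm hs hcu))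
  · -- straddle step (x,y) with chain c → d
    have hc := conn_straddle hs hH hxy hcd' hx hy hd
    exact conn_trans hax hc

end ConnAux
/-! ### The step relation for `σ ∨ 0̂ₙ` -/

def stepRel (n : ℕ) (σ : Finset (Finset (Fin (2 * n)))) (a b : Fin (2 * n)) : Prop :=
  (∃ B ∈ σ, a ∈ B ∧ b ∈ B) ∨
    (∃ i : Fin n, (a = oddE n i ∨ a = evenE n i) ∧ (b = oddE n i ∨ b = evenE n i))

lemma stepRel_symm (n : ℕ) (σ : Finset (Finset (Fin (2 * n)))) :
    ∀ a b, stepRel n σ a b → stepRel n σ b a := by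
  intro a b h
  rcases h with ⟨B, hB, h1, h2⟩ | ⟨i, h1, h2⟩
  · exact Or.inl ⟨B, hB, h2, h1⟩
  · exact Or.inr ⟨i, h2, h1⟩

lemma pair_val {n : ℕ} {c : Fin (2 * n)} {i : Fin n}
    (h : c = oddE n i ∨ c = evenE n i) : c.1 = 2 * i.1 ∨ c.1 = 2 * i.1 + 1 := by
  rcases h with h | h
  · left; rw [h]; rfl
  · right; rw [h]; rfl

lemma stepRel_H {n : ℕ} {σ : Finset (Finset (Fin (2 * n)))} (hnc : IsNonCrossing σ) :
    ∀ a b c d : Fin (2 * n), stepRel n σ a b → stepRel n σ c d →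
      a < c → c < b → b < d → Conn (stepRel n σ) a c := by
  intro a b c d hab hcd h1 h2 h3
  rcases hab with ⟨B, hB, haB, hbB⟩ | ⟨i, hai, hbi⟩
  · rcases hcd with ⟨D, hD, hcD, hdD⟩ | ⟨i, hci, hdi⟩
    · by_cases hBD : B = D
      · subst hBD
        exact conn_single (Or.inl ⟨B, hB, haB, hcD⟩)
      · exact absurd ⟨a, haB, b, hbB, c, hcD, d, hdD, h1, h2, h3⟩ (hnc B hB D hD hBD)
    · exfalso
      have hc := pair_val hci
      have hd := pair_val hdi
      rw [Fin.lt_def] at h2 h3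
      omega
  · exfalso
    have ha := pair_val hai
    have hb := pair_val hbi
    rw [Fin.lt_def] at h1 h2
    omega

def halfIdx (n : ℕ) (a : Fin (2 * n)) : Fin n := ⟨a.1 / 2, by have := a.2; omega⟩

lemma half_spec (n : ℕ) (a : Fin (2 * n)) :
    a = oddE n (halfIdx n a) ∨ a = evenE n (halfIdx n a) := by
  by_cases h : a.1 % 2 = 0
  · left; apply Fin.ext; show a.1 = 2 * (a.1 / 2); omega
  · right; apply Fin.ext; show a.1 = 2 * (a.1 / 2) + 1; omega

lemma conn_half (n : ℕ) (σ : Finset (Finset (Fin (2 * n)))) (a : Fin (2 * n)) :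
    Conn (stepRel n σ) (oddE n (halfIdx n a)) a :=
  conn_single (Or.inr ⟨halfIdx n a, Or.inl rfl, half_spec n a⟩)

lemma conn_odd_even (n : ℕ) (σ : Finset (Finset (Fin (2 * n)))) (i : Fin n) :
    Conn (stepRel n σ) (oddE n i) (evenE n i) :=
  conn_single (Or.inr ⟨i, Or.inl rfl, Or.inr rfl⟩)

noncomputable def cls (n : ℕ) (σ : Finset (Finset (Fin (2 * n)))) (i : Fin n) :
    Finset (Fin n) :=
  @Finset.filter _ (fun j => Conn (stepRel n σ) (oddE n i) (oddE n j))
    (Classical.decPred _) Finset.univ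

lemma mem_cls {n : ℕ} {σ : Finset (Finset (Fin (2 * n)))} {i j : Fin n} :
    j ∈ cls n σ i ↔ Conn (stepRel n σ) (oddE n i) (oddE n j) := by
  classical
  unfold cls
  rw [Finset.mem_filter]
  simp

lemma cls_eq_of_conn {n : ℕ} {σ : Finset (Finset (Fin (2 * n)))} {i j : Fin n}
    (h : Conn (stepRel n σ) (oddE n i) (oddE n j)) : cls n σ i = cls n σ j := by
  ext k
  simp only [mem_cls]
  constructor
  · intro hk; exact conn_trans (conn_symm (stepRel_symm n σ) h) hk
  · intro hk; exact conn_trans h hk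

lemma oddE_lt {n : ℕ} {i j : Fin n} (h : i < j) : oddE n i < oddE n j := by
  rw [Fin.lt_def] at h ⊢
  show 2 * i.1 < 2 * j.1
  omega

/-- Membership in a doubled connectivity class. -/
lemma mem_dblcls {n : ℕ} {σ : Finset (Finset (Fin (2 * n)))} {i : Fin n} {a : Fin (2 * n)} :
    a ∈ ((cls n σ i).image (oddE n) ∪ (cls n σ i).image (evenE n)) ↔
      Conn (stepRel n σ) (oddE n i) a := by
  constructor
  · intro h
    rcases Finset.mem_union.mp h with h | h
    · obtain ⟨j, hj, rfl⟩ := Finset.mem_image.mp h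
      exact mem_cls.mp hj
    · obtain ⟨j, hj, rfl⟩ := Finset.mem_image.mp h
      exact conn_trans (mem_cls.mp hj) (conn_odd_even n σ j)
  · intro h
    have hco : Conn (stepRel n σ) (oddE n i) (oddE n (halfIdx n a)) :=
      conn_trans h (conn_symm (stepRel_symm n σ) (conn_half n σ a))
    rcases half_spec n a with he | he
    · apply Finset.mem_union_left
      exact Finset.mem_image.mpr ⟨halfIdx n a, mem_cls.mpr hco, he.symm⟩
    · apply Finset.mem_union_right
      exact Finset.mem_image.mpr ⟨halfIdx n a, mem_cls.mpr hco, he.symm⟩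

/-- Chains stay inside blocks of any common upper bound. -/
lemma conn_mem_block {n : ℕ} {σ τ : Finset (Finset (Fin (2 * n)))}
    (hτ : τ ∈ NC (2 * n)) (h1 : ncle σ τ) (h2 : ncle (zeroHat n) τ)
    {p q : Fin (2 * n)} (h : Conn (stepRel n σ) p q)
    {E : Finset (Fin (2 * n))} (hE : E ∈ τ) (hp : p ∈ E) : q ∈ E := by
  obtain ⟨t, f, hf0, hft, hf⟩ := h
  have key : ∀ i, i ≤ t → f i ∈ E := by
    intro i
    induction i with
    | zero => intro _; rw [hf0]; exact hp
    | succ k ih =>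
      intro hk1
      have hk : f k ∈ E := ih (by omega)
      have hstep := hf k (by omega)
      rcases hstep with ⟨B, hB, h3, h4⟩ | ⟨j, h3, h4⟩
      · obtain ⟨F, hF, hBF⟩ := h1 B hB
        have hEF : E = F := by
          obtain ⟨G, -, hG⟩ := hτ.2.1 (f k)
          exact (hG E ⟨hE, hk⟩).trans (hG F ⟨hF, hBF h3⟩).symm
        rw [hEF]; exact hBF h4
      · have hpair : ({oddE n j, evenE n j} : Finset (Fin (2 * n))) ∈ zeroHat n :=
          Finset.mem_image.mpr ⟨j, Finset.mem_univ j, rfl⟩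
        obtain ⟨F, hF, hBF⟩ := h2 _ hpair
        have hfk : f k ∈ ({oddE n j, evenE n j} : Finset (Fin (2 * n))) := by
          rcases h3 with h | h <;> simp [h]
        have hfk1 : f (k + 1) ∈ ({oddE n j, evenE n j} : Finset (Fin (2 * n))) := by
          rcases h4 with h | h <;> simp [h]
        have hEF : E = F := by
          obtain ⟨G, -, hG⟩ := hτ.2.1 (f k)
          exact (hG E ⟨hE, hk⟩).trans (hG F ⟨hF, hBF hfk⟩).symm
        rw [hEF]; exact hBF hfk1
  rw [← hft]; exact key t le_rfl

lemma ncle_antisymm {m : ℕ} {P Q : Finset (Finset (Fin m))}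
    (hP : P ∈ NC m) (hQ : Q ∈ NC m) (h1 : ncle P Q) (h2 : ncle Q P) : P = Q := by
  have main : ∀ R S : Finset (Finset (Fin m)), R ∈ NC m → S ∈ NC m →
      ncle R S → ncle S R → R ⊆ S := by
    intro R S hR hS hrs hsr B hB
    obtain ⟨a, ha⟩ := hR.1 B hB
    obtain ⟨D, hD, hBD⟩ := hrs B hB
    obtain ⟨B', hB', hDB'⟩ := hsr D hD
    have hBB' : B = B' := by
      obtain ⟨G, -, hG⟩ := hR.2.1 a
      exact (hG B ⟨hB, ha⟩).trans (hG B' ⟨hB', hDB' (hBD ha)⟩).symm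
    have hsub : D ⊆ B := by rw [hBB']; exact hDB'
    have hBD' : B = D := Finset.Subset.antisymm hBD hsub
    rw [hBD']; exact hD
  exact Finset.Subset.antisymm (main P Q hP hQ h1 h2) (main Q P hQ hP h2 h1)

lemma doubleP_injective {n : ℕ} {π π' : Finset (Finset (Fin n))}
    (h : doubleP n π = doubleP n π') : π = π' := by
  have key : ∀ (D : Finset (Fin n)) (i : Fin n),
      i ∈ D ↔ oddE n i ∈ (D.image (oddE n) ∪ D.image (evenE n)) := by
    intro D i
    constructor
    · intro h'; exact Finset.mem_union_left _ (Finset.mem_image_of_mem _ h')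
    · intro h'
      rcases Finset.mem_union.mp h' with h' | h'
      · obtain ⟨j, hj, he⟩ := Finset.mem_image.mp h'
        have hv : 2 * j.1 = 2 * i.1 := congrArg Fin.val he
        have hji : j = i := Fin.ext (by omega)
        rwa [hji] at hj
      · obtain ⟨j, hj, he⟩ := Finset.mem_image.mp h'
        have hv : 2 * j.1 + 1 = 2 * i.1 := congrArg Fin.val he
        omega
  have hinj : Function.Injective
      (fun B : Finset (Fin n) => B.image (oddE n) ∪ B.image (evenE n)) := by
    intro B C hBC
    have hBC' : B.image (oddE n) ∪ B.image (evenE n)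
        = C.image (oddE n) ∪ C.image (evenE n) := hBC
    ext i
    rw [key B, key C, hBC']
  exact Finset.image_injective hinj h
lemma key_exists {n : ℕ} {σ : Finset (Finset (Fin (2 * n)))} (hσ : σ ∈ NC (2 * n)) :
    ∃ π ∈ NC n, IsJoin (2 * n) σ (zeroHat n) (doubleP n π) := by
  have hs := stepRel_symm n σ
  have hH := stepRel_H (n := n) (σ := σ) hσ.2.2
  set π : Finset (Finset (Fin n)) := Finset.univ.image (cls n σ) with hπdef
  have hmemπ : ∀ i : Fin n, cls n σ i ∈ π :=
    fun i => Finset.mem_image_of_mem _ (Finset.mem_univ i)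
  have hmemD : ∀ i : Fin n,
      ((cls n σ i).image (oddE n) ∪ (cls n σ i).image (evenE n)) ∈ doubleP n π :=
    fun i => Finset.mem_image.mpr ⟨cls n σ i, hmemπ i, rfl⟩
  have hdecD : ∀ D ∈ doubleP n π, ∃ i : Fin n,
      D = ((cls n σ i).image (oddE n) ∪ (cls n σ i).image (evenE n)) := by
    intro D hD
    obtain ⟨B, hB, rfl⟩ := Finset.mem_image.mp hD
    obtain ⟨i, -, rfl⟩ := Finset.mem_image.mp hB
    exact ⟨i, rfl⟩
  have hπNC : π ∈ NC n := by
    refine ⟨?_, ?_, ?_⟩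
    · intro B hB
      obtain ⟨i, -, rfl⟩ := Finset.mem_image.mp hB
      exact ⟨i, mem_cls.mpr (conn_refl _)⟩
    · intro a
      refine ⟨cls n σ a, ⟨hmemπ a, mem_cls.mpr (conn_refl _)⟩, ?_⟩
      rintro B ⟨hB, haB⟩
      obtain ⟨j, -, rfl⟩ := Finset.mem_image.mp hB
      exact cls_eq_of_conn (mem_cls.mp haB)
    · intro B hB D hD hne hcross
      obtain ⟨i, -, rfl⟩ := Finset.mem_image.mp hB
      obtain ⟨j, -, rfl⟩ := Finset.mem_image.mp hD
      obtain ⟨p₁, hp₁, p₂, hp₂, k₁, hk₁, k₂, hk₂, l1, l2, l3⟩ := hcross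
      have c1 : Conn (stepRel n σ) (oddE n p₁) (oddE n p₂) :=
        conn_trans (conn_symm hs (mem_cls.mp hp₁)) (mem_cls.mp hp₂)
      have c2 : Conn (stepRel n σ) (oddE n k₁) (oddE n k₂) :=
        conn_trans (conn_symm hs (mem_cls.mp hk₁)) (mem_cls.mp hk₂)
      have hcc := conn_cross hs hH c1 c2 (oddE_lt l1) (oddE_lt l2) (oddE_lt l3)
      exact hne ((cls_eq_of_conn (mem_cls.mp hp₁)).trans
        ((cls_eq_of_conn hcc).trans (cls_eq_of_conn (mem_cls.mp hk₁)).symm))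
  refine ⟨π, hπNC, ?_, ?_, ?_, ?_⟩
  · -- doubleP n π ∈ NC (2 * n)
    refine ⟨?_, ?_, ?_⟩
    · intro D hD
      obtain ⟨i, rfl⟩ := hdecD D hD
      exact ⟨oddE n i, mem_dblcls.mpr (conn_refl _)⟩
    · intro a
      refine ⟨(cls n σ (halfIdx n a)).image (oddE n) ∪ (cls n σ (halfIdx n a)).image (evenE n),
        ⟨hmemD _, mem_dblcls.mpr (conn_half n σ a)⟩, ?_⟩
      rintro D ⟨hD, haD⟩
      obtain ⟨j, rfl⟩ := hdecD D hD
      have hc : Conn (stepRel n σ) (oddE n j) (oddE n (halfIdx n a)) :=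
        conn_trans (mem_dblcls.mp haD) (conn_symm hs (conn_half n σ a))
      rw [cls_eq_of_conn hc]
    · intro B hB D hD hne hcross
      obtain ⟨i, rfl⟩ := hdecD B hB
      obtain ⟨j, rfl⟩ := hdecD D hD
      obtain ⟨a₁, ha₁, a₂, ha₂, b₁, hb₁, b₂, hb₂, l1, l2, l3⟩ := hcross
      have c1 : Conn (stepRel n σ) a₁ a₂ :=
        conn_trans (conn_symm hs (mem_dblcls.mp ha₁)) (mem_dblcls.mp ha₂)
      have c2 : Conn (stepRel n σ) b₁ b₂ :=
        conn_trans (conn_symm hs (mem_dblcls.mp hb₁)) (mem_dblcls.mp hb₂)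
      have hcc := conn_cross hs hH c1 c2 l1 l2 l3
      have hij : Conn (stepRel n σ) (oddE n i) (oddE n j) :=
        conn_trans (mem_dblcls.mp ha₁)
          (conn_trans hcc (conn_symm hs (mem_dblcls.mp hb₁)))
      exact hne (by rw [cls_eq_of_conn hij])
  · -- ncle σ (doubleP n π)
    intro B hB
    obtain ⟨b, hb⟩ := hσ.1 B hB
    refine ⟨_, hmemD (halfIdx n b), ?_⟩
    intro a ha
    exact mem_dblcls.mpr (conn_trans (conn_half n σ b)
      (conn_single (Or.inl ⟨B, hB, hb, ha⟩)))
  · -- ncle (zeroHat n) (doubleP n π)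
    intro B hB
    obtain ⟨i, -, rfl⟩ := Finset.mem_image.mp hB
    refine ⟨_, hmemD i, ?_⟩
    intro a ha
    rcases Finset.mem_insert.mp ha with h | h
    · rw [h]; exact mem_dblcls.mpr (conn_refl _)
    · rw [Finset.mem_singleton.mp h]
      exact mem_dblcls.mpr (conn_odd_even n σ i)
  · -- minimality
    intro τ hτ h1 h2 B hB
    obtain ⟨i, rfl⟩ := hdecD B hB
    obtain ⟨E, hE, -⟩ := hτ.2.1 (oddE n i)
    refine ⟨E, hE.1, ?_⟩
    intro a ha
    exact conn_mem_block hτ h1 h2 (mem_dblcls.mp ha) hE.1 hE.2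

/-- `NC_S(2n)` decomposes as the disjoint union over `π ∈ NC(n)` of the sets
`{σ ∈ NC_S(2n) : σ ∨ 0̂ₙ = π̂}`: every same-parity `σ` lies in one of the sets, and the
sets are pairwise disjoint. -/
theorem stmt5 (n : ℕ) :
    (∀ σ ∈ NC (2 * n), SameParity σ →
      ∃ π ∈ NC n, IsJoin (2 * n) σ (zeroHat n) (doubleP n π)) ∧
    (∀ σ ∈ NC (2 * n), SameParity σ → ∀ π ∈ NC n, ∀ π' ∈ NC n,
      IsJoin (2 * n) σ (zeroHat n) (doubleP n π) →
      IsJoin (2 * n) σ (zeroHat n) (doubleP n π') → π = π') := by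
  constructor
  · intro σ hσ _
    exact key_exists hσ
  · intro σ hσ _ π hπ π' hπ' hJ hJ'
    have l1 : ncle (doubleP n π) (doubleP n π') :=
      hJ.2.2.2 _ hJ'.1 hJ'.2.1 hJ'.2.2.1
    have l2 : ncle (doubleP n π') (doubleP n π) :=
      hJ'.2.2.2 _ hJ.1 hJ.2.1 hJ.2.2.1
    exact doubleP_injective (ncle_antisymm hJ.1 hJ'.1 l1 l2)
end

section
/- The set NCL(n) of non-crossing linked partitions of {1,…,n}, ordered by π ⪰ σ iff every block of π is a union of blocks of σ, contains NC(n) as a subposet, and for each γ ∈ NC(n) the set [γ] = {σ ∈ NCL(n) : c(σ) = γ} has γ as its maximal element. -/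
open Finset

/-- Non-crossing linked partitions of {1,…,n}: blocks are nonempty, cover everything, are
mutually non-crossing, any two blocks meet in at most one element, and a common element
forces both blocks to have ≥ 2 elements and to be minimal in exactly one of them. -/
def NCL (n : ℕ) : Set (Finset (Finset (Fin n))) :=
  {P | (∀ B ∈ P, B.Nonempty) ∧ (∀ a : Fin n, ∃ B ∈ P, a ∈ B) ∧ IsNonCrossing P ∧
    ∀ B ∈ P, ∀ D ∈ P, B ≠ D → (B ∩ D).card ≤ 1 ∧
      ∀ j ∈ B ∩ D, 2 ≤ B.card ∧ 2 ≤ D.card ∧ ((∀ b ∈ B, j ≤ b) ↔ ¬ ∀ b ∈ D, j ≤ b)}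

/-- A block `B` of a non-crossing linked partition `π` is exterior if no other block `D`
contains elements `l, s` with `l ≤ min B` and `max B < s`. -/
def IsExtL {n : ℕ} (π : Finset (Finset (Fin n))) (B : Finset (Fin n)) : Prop :=
  ¬ ∃ D ∈ π, D ≠ B ∧ ∃ l ∈ D, ∃ s ∈ D, ∀ b ∈ B, l ≤ b ∧ b < s

/-- `i` and `j` are connected in `π`: joined by a chain of pairwise intersecting blocks. -/
def Connected {n : ℕ} (π : Finset (Finset (Fin n))) (i j : Fin n) : Prop :=
  Relation.ReflTransGen (fun a b => ∃ B ∈ π, a ∈ B ∧ b ∈ B) i j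

/-- `γ` is the non-crossing partition `c(π)` of connected components of `π`: `i, j` lie in
a common block of `γ` iff they are connected in `π`. -/
def cIs {n : ℕ} (π γ : Finset (Finset (Fin n))) : Prop :=
  ∀ i j : Fin n, (∃ B ∈ γ, i ∈ B ∧ j ∈ B) ↔ Connected π i j

/-- The order on `NCL(n)`: `π ⪰ σ` iff every block of `π` is a union of blocks of `σ`. -/
def nclge {n : ℕ} (π σ : Finset (Finset (Fin n))) : Prop :=
  ∀ B ∈ π, ∃ S ⊆ σ, B = S.sup id

lemma NC.eq_blocks {n : ℕ} {P : Finset (Finset (Fin n))} (hP : P ∈ NC n)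
    {B D : Finset (Fin n)} {a : Fin n} (hB : B ∈ P) (hD : D ∈ P) (haB : a ∈ B) (haD : a ∈ D) :
    B = D := by
  obtain ⟨C, _, hu⟩ := hP.2.1 a
  rw [hu B ⟨hB, haB⟩, hu D ⟨hD, haD⟩]

/-- `NCL(n)` with the order `⪰` contains `NC(n)` as a subposet (the order on
`NC(n)` agreeing with reversed refinement), and for each `γ ∈ NC(n)` the class
`[γ] = {σ ∈ NCL(n) : c(σ) = γ}` has `γ` as its maximal element. -/
theorem stmt9 (n : ℕ) :
    (∀ γ ∈ NC n, γ ∈ NCL n) ∧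
    (∀ γ ∈ NC n, ∀ δ ∈ NC n, (nclge γ δ ↔ ncle δ γ)) ∧
    (∀ γ ∈ NC n, cIs γ γ ∧ ∀ σ ∈ NCL n, cIs σ γ → nclge γ σ) := by
  refine ⟨?_, ?_, ?_⟩
  · rintro γ ⟨h1, h2, h3⟩
    refine ⟨h1, fun a => (h2 a).exists, h3, fun B hB D hD hBD => ?_⟩
    have hempty : B ∩ D = ∅ := by
      by_contra h
      obtain ⟨j, hj⟩ := Finset.nonempty_iff_ne_empty.2 h
      simp only [Finset.mem_inter] at hj
      exact hBD (NC.eq_blocks ⟨h1, h2, h3⟩ hB hD hj.1 hj.2)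
    refine ⟨by simp [hempty], fun j hj => absurd hj (by simp [hempty])⟩
  · intro γ hγ δ hδ
    constructor
    · intro h B hB
      obtain ⟨a, ha⟩ := hδ.1 B hB
      obtain ⟨C, hC, hu⟩ := hγ.2.1 a
      obtain ⟨S, hS, hCS⟩ := h C hC.1
      have haC : a ∈ S.sup id := hCS ▸ hC.2
      rw [Finset.mem_sup] at haC
      obtain ⟨B', hB'S, haB'⟩ := haC
      have : B = B' := NC.eq_blocks hδ hB (hS hB'S) ha haB'
      refine ⟨C, hC.1, ?_⟩
      rw [this, hCS]
      exact Finset.le_sup (f := id) hB'S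
    · intro h B hB
      refine ⟨δ.filter (· ⊆ B), Finset.filter_subset _ _, ?_⟩
      apply Finset.Subset.antisymm
      · intro a ha
        obtain ⟨D, hD, haD⟩ := (hδ.2.1 a).exists
        obtain ⟨C, hC, hDC⟩ := h D hD
        have : C = B := NC.eq_blocks hγ hC hB (hDC haD) ha
        rw [Finset.mem_sup]
        exact ⟨D, Finset.mem_filter.2 ⟨hD, this ▸ hDC⟩, haD⟩
      · intro a ha
        rw [Finset.mem_sup] at ha
        obtain ⟨D, hD, haD⟩ := ha
        exact (Finset.mem_filter.1 hD).2 haD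
  · intro γ hγ
    have hc : cIs γ γ := by
      intro i j
      constructor
      · intro h
        exact Relation.ReflTransGen.single h
      · intro h
        induction h with
        | refl =>
          obtain ⟨B, hB, hiB⟩ := (hγ.2.1 i).exists
          exact ⟨B, hB, hiB, hiB⟩
        | tail _ hstep ih =>
          obtain ⟨B, hB, hiB, hbB⟩ := ih
          obtain ⟨D, hD, hbD, hcD⟩ := hstep
          have : B = D := NC.eq_blocks hγ hB hD hbB hbD
          exact ⟨B, hB, hiB, this ▸ hcD⟩
    refine ⟨hc, fun σ hσ hcσ B hB => ?_⟩
    have key : ∀ D ∈ σ, ∀ a ∈ D, a ∈ B → D ⊆ B := by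
      intro D hD a haD haB d hdD
      have hconn : Connected σ a d := Relation.ReflTransGen.single ⟨D, hD, haD, hdD⟩
      obtain ⟨C, hC, haC, hdC⟩ := (hcσ a d).2 hconn
      have : C = B := NC.eq_blocks hγ hC hB haC haB
      exact this ▸ hdC
    refine ⟨σ.filter (· ⊆ B), Finset.filter_subset _ _, ?_⟩
    apply Finset.Subset.antisymm
    · intro a ha
      obtain ⟨D, hD, haD⟩ := hσ.2.1 a
      rw [Finset.mem_sup]
      exact ⟨D, Finset.mem_filter.2 ⟨hD, key D hD a haD ha⟩, haD⟩
    · intro a ha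
      rw [Finset.mem_sup] at ha
      obtain ⟨D, hD, haD⟩ := ha
      exact (Finset.mem_filter.1 hD).2 haD
end
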